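/- There exists a bijection φ of B_n onto itself such that for every signed permutation w, (Fix^- w, Fix^+ w, Neg w) = (Pix^- φ(w), Pix^+ φ(w), Neg φ(w)). -/
import Mathlib


open Finset

attribute [local instance] Classical.propDecidable

noncomputable section

/-- The word `x_1 x_2 ... x_n` (0-indexed) of a signed permutation of order `n`,
encoded as a pair (permutation, signs): `x_i = ±(σ(i)+1)`. -/
def sword (n : ℕ) (w : Equiv.Perm (Fin n) × (Fin n → Bool)) : ℕ → ℤ :=
  fun i => if h : i < n then
      (if w.2 ⟨i, h⟩ then -(((w.1 ⟨i, h⟩ : ℕ) : ℤ) + 1) else (((w.1 ⟨i, h⟩ : ℕ) : ℤ) + 1))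
    else 0

/-- number of negative letters -/
def negStat (n : ℕ) (x : ℕ → ℤ) : ℕ := ((Finset.range n).filter (fun i => x i < 0)).card

/-- number of positive fixed points (`x_i = i`, 1-indexed) -/
def fixPlus (n : ℕ) (x : ℕ → ℤ) : ℕ :=
  ((Finset.range n).filter (fun i => x i = (i : ℤ) + 1)).card

/-- number of negative fixed points (`x_i = -i`, 1-indexed) -/
def fixMinus (n : ℕ) (x : ℕ → ℤ) : ℕ :=
  ((Finset.range n).filter (fun i => x i = -((i : ℤ) + 1))).card

/-- major index of the word -/
def majStat (n : ℕ) (x : ℕ → ℤ) : ℕ :=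
  ∑ i ∈ Finset.range (n - 1), if x (i + 1) < x i then i + 1 else 0

/-- number of inversions of the word -/
def invStat (n : ℕ) (x : ℕ → ℤ) : ℕ :=
  ((Finset.range n ×ˢ Finset.range n).filter (fun p => p.1 < p.2 ∧ x p.2 < x p.1)).card

/-- length function `ℓ(w) = inv w + ∑_{x_i<0} |x_i|` -/
def lenStat (n : ℕ) (x : ℕ → ℤ) : ℕ :=
  invStat n x + ∑ i ∈ Finset.range n, if x i < 0 then (x i).natAbs else 0

/-- flag-major index `fmaj = 2 maj + neg` -/
def fmajStat (n : ℕ) (x : ℕ → ℤ) : ℕ := 2 * majStat n x + negStat n x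

/-- the word `x_0 ... x_{m-1}` has its leftmost trough at position `2k` (1-indexed):
`x_1 > x_2 > ... > x_{2k}` and `x_{2k} < x_{2k+1}` (with `x_{m+1} = ∞`). -/
def IsDesarAt (m k : ℕ) (x : ℕ → ℤ) : Prop :=
  1 ≤ k ∧ 2 * k ≤ m ∧ (∀ i, i + 1 < 2 * k → x (i + 1) < x i) ∧
    (2 * k = m ∨ x (2 * k - 1) < x (2 * k))

/-- a word of length `m` is a desarrangement (empty word included) -/
def IsDesar (m : ℕ) (x : ℕ → ℤ) : Prop :=
  m = 0 ∨ ∃ k, IsDesarAt m k x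

/-- the length of the longest right factor of the word of length `n`
which is a desarrangement -/
def dlen (n : ℕ) (x : ℕ → ℤ) : ℕ :=
  sSup {m | m ≤ n ∧ IsDesar m (fun i => x (n - m + i))}

/-- number of letters of `w^-` in the pixed factorization `w = w^- w^+ w^d` -/
def pixMinus (n : ℕ) (x : ℕ → ℤ) : ℕ :=
  ((Finset.range (n - dlen n x)).filter (fun i => x i < 0)).card

/-- number of letters of `w^+` in the pixed factorization `w = w^- w^+ w^d` -/
def pixPlus (n : ℕ) (x : ℕ → ℤ) : ℕ :=
  ((Finset.range (n - dlen n x)).filter (fun i => 0 < x i)).card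

/-- the number of derangements of an `m`-element set -/
def dnum (m : ℕ) : ℕ :=
  (Finset.univ.filter (fun σ : Equiv.Perm (Fin m) => ∀ i, σ i ≠ i)).card

/-- the word of an ordinary permutation of `{1, ..., m}` -/
def pword (m : ℕ) (σ : Equiv.Perm (Fin m)) : ℕ → ℤ :=
  fun i => if h : i < m then ((σ ⟨i, h⟩ : ℕ) : ℤ) + 1 else 0

/-- the q-ascending factorial `(q;q)_m` -/
def qq {K : Type*} [CommRing K] (q : K) (m : ℕ) : K :=
  ∏ i ∈ Finset.range m, (1 - q ^ (i + 1))

/-- `D_m(q)`: generating polynomial for derangements of order `m` by major index -/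
def Dmaj {K : Type*} [CommRing K] (q : K) (m : ℕ) : K :=
  ∑ σ ∈ Finset.univ.filter (fun σ : Equiv.Perm (Fin m) => ∀ i, σ i ≠ i),
    q ^ majStat m (pword m σ)

/-- the set of positive fixed points (as letters) -/
def FixPlusSet (n : ℕ) (x : ℕ → ℤ) : Finset ℤ :=
  ((Finset.range n).filter (fun i => x i = (i : ℤ) + 1)).image (fun i => (i : ℤ) + 1)

/-- the set of negative fixed points (as letters) -/
def FixMinusSet (n : ℕ) (x : ℕ → ℤ) : Finset ℤ :=
  ((Finset.range n).filter (fun i => x i = -((i : ℤ) + 1))).image (fun i => -((i : ℤ) + 1))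

/-- the set of negative letters -/
def NegSet (n : ℕ) (x : ℕ → ℤ) : Finset ℤ :=
  ((Finset.range n).filter (fun i => x i < 0)).image x

/-- the set of letters of `w^-` in the pixed factorization -/
def PixMinusSet (n : ℕ) (x : ℕ → ℤ) : Finset ℤ :=
  ((Finset.range (n - dlen n x)).filter (fun i => x i < 0)).image x

/-- the set of letters of `w^+` in the pixed factorization -/
def PixPlusSet (n : ℕ) (x : ℕ → ℤ) : Finset ℤ :=
  ((Finset.range (n - dlen n x)).filter (fun i => 0 < x i)).image x
-- Section 1: word-level lemmas about dlen

lemma not_isDesar_one (x : ℕ → ℤ) : ¬ IsDesar 1 x := by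
  rintro (h | ⟨k, hk1, hk2, -, -⟩) <;> omega

lemma not_isDesar_of_asc {m : ℕ} {x : ℕ → ℤ} (hm : 1 ≤ m) (h : ¬ x 1 < x 0) :
    ¬ IsDesar m x := by
  rintro (rfl | ⟨k, hk1, hk2, hdec, -⟩)
  · omega
  · exact h (hdec 0 (by omega))

/-- if the tail of a word is a (nonempty) desarrangement, the whole word
(one letter longer) is not. -/
lemma not_isDesar_cons {m : ℕ} {x : ℕ → ℤ} (hm : 1 ≤ m)
    (h : IsDesar m (fun i => x (i + 1))) : ¬ IsDesar (m + 1) x := by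
  by_cases hasc : x 1 < x 0
  · rcases h with h0 | ⟨k, hk1, hk2, hdec, hend⟩
    · omega
    have hdec' : ∀ i, i + 1 < 2 * k → x (i + 1 + 1) < x (i + 1) := fun i hi => hdec i hi
    have hend' : 2 * k = m ∨ x (2 * k - 1 + 1) < x (2 * k + 1) := hend
    rintro (h' | ⟨k', hk1', hk2', hdec2, hend2⟩)
    · omega
    -- x is strictly decreasing on indices 0..2k+1
    have hxdec : ∀ i, i + 1 ≤ 2 * k → x (i + 1) < x i := by
      intro i hi
      rcases Nat.eq_zero_or_pos i with rfl | hipos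
      · exact hasc
      · obtain ⟨j, rfl⟩ := Nat.exists_eq_add_of_le hipos
        have h1 := hdec' j (by omega)
        have e1 : j + 1 + 1 = 1 + j + 1 := by omega
        have e2 : j + 1 = 1 + j := by omega
        rwa [e1, e2] at h1
    rcases le_or_gt (2 * k') (2 * k + 1) with hle | hlt
    · rcases hend2 with heq | hasc'
      · omega
      · have hd := hxdec (2 * k' - 1) (by omega)
        have h2 : 2 * k' - 1 + 1 = 2 * k' := by omega
        rw [h2] at hd
        omega
    · rcases hend' with heq | hasc2
      · omega
      · have hd := hdec2 (2 * k) (by omega)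
        have h3 : (2 * k - 1) + 1 = 2 * k := by omega
        rw [h3] at hasc2
        omega
  · exact not_isDesar_of_asc (by omega) hasc

lemma dlen_spec (n : ℕ) (x : ℕ → ℤ) :
    dlen n x ≤ n ∧ IsDesar (dlen n x) (fun i => x (n - dlen n x + i)) := by
  have h0 : (0 : ℕ) ∈ {m | m ≤ n ∧ IsDesar m (fun i => x (n - m + i))} :=
    ⟨Nat.zero_le n, Or.inl rfl⟩
  have hbdd : BddAbove {m | m ≤ n ∧ IsDesar m (fun i => x (n - m + i))} :=
    ⟨n, fun m hm => hm.1⟩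
  exact Nat.sSup_mem ⟨0, h0⟩ hbdd

lemma le_dlen {n m : ℕ} (x : ℕ → ℤ) (hm : m ≤ n)
    (h : IsDesar m (fun i => x (n - m + i))) : m ≤ dlen n x :=
  le_csSup ⟨n, fun m' hm' => hm'.1⟩ ⟨hm, h⟩

/-- the prefix before the longest desarrangement right factor is increasing -/
lemma dlen_prefix_incr {n : ℕ} {x : ℕ → ℤ}
    (hinj : ∀ i j, i < n → j < n → x i = x j → i = j) :
    ∀ i, i + 1 < n - dlen n x → x i < x (i + 1) := by
  set d := dlen n x with hd
  obtain ⟨hdn, hdesar⟩ := dlen_spec n x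
  set p := n - d with hp
  suffices H : ∀ q i, p - i ≤ q → i + 1 < p → x i < x (i + 1) by
    intro i hi; exact H p i (by omega) hi
  intro q
  induction q with
  | zero => intro i h1 h2; omega
  | succ q ih =>
    intro i h1 h2
    by_contra hnot
    have hdesc : x (i + 1) < x i := by
      rcases lt_trichotomy (x (i+1)) (x i) with h | h | h
      · exact h
      · exact absurd (hinj _ _ (by omega) (by omega) h.symm) (by omega)
      · exact absurd h hnot
    have hkey : IsDesar (n - i) (fun j => x (n - (n - i) + j)) := by
      have hni : n - (n - i) = i := by omega
      rw [hni]
      by_cases hcase : i + 2 < p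
      · have hax : x (i + 1) < x (i + 2) := ih (i + 1) (by omega) (by omega)
        refine Or.inr ⟨1, le_refl 1, by omega, ?_, Or.inr ?_⟩
        · intro j hj
          have hj0 : j = 0 := by omega
          subst hj0
          show x (i + 1) < x (i + 0)
          have e : i + 0 = i := by omega
          rw [e]; exact hdesc
        · show x (i + (2 * 1 - 1)) < x (i + 2 * 1)
          have e1 : i + (2 * 1 - 1) = i + 1 := by omega
          have e2 : i + 2 * 1 = i + 2 := by omega
          rw [e1, e2]; exact hax
      · have hip : i + 2 = p := by omega
        rcases Nat.eq_zero_or_pos d with hd0 | hdpos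
        · refine Or.inr ⟨1, le_refl 1, by omega, ?_, Or.inl (by omega)⟩
          intro j hj
          have hj0 : j = 0 := by omega
          subst hj0
          show x (i + 1) < x (i + 0)
          have e : i + 0 = i := by omega
          rw [e]; exact hdesc
        · rcases hdesar with h0 | ⟨k, hk1, hk2, hdec, hend⟩
          · omega
          have hdec' : ∀ j, j + 1 < 2 * k → x (p + (j + 1)) < x (p + j) :=
            fun j hj => hdec j hj
          have hend' : 2 * k = d ∨ x (p + (2 * k - 1)) < x (p + 2 * k) := hend
          have hpn : p < n := by omega
          rcases lt_trichotomy (x (p - 1)) (x p) with hB1 | hBeq | hB2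
          · refine Or.inr ⟨1, le_refl 1, by omega, ?_, Or.inr ?_⟩
            · intro j hj
              have hj0 : j = 0 := by omega
              subst hj0
              show x (i + 1) < x (i + 0)
              have e : i + 0 = i := by omega
              rw [e]; exact hdesc
            · show x (i + (2 * 1 - 1)) < x (i + 2 * 1)
              have e1 : i + (2 * 1 - 1) = p - 1 := by omega
              have e2 : i + 2 * 1 = p := by omega
              rw [e1, e2]; exact hB1
          · exact absurd (hinj _ _ (by omega) (by omega) hBeq) (by omega)
          · refine Or.inr ⟨k + 1, by omega, by omega, ?_, ?_⟩
            · intro j hj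
              show x (i + (j + 1)) < x (i + j)
              rcases Nat.lt_or_ge j 2 with hj2 | hj2
              · interval_cases j
                · have e1 : i + (0 + 1) = i + 1 := by omega
                  have e2 : i + 0 = i := by omega
                  rw [e1, e2]; exact hdesc
                · have e1 : i + (1 + 1) = p := by omega
                  have e2 : i + 1 = p - 1 := by omega
                  rw [e1, e2]; exact hB2
              · obtain ⟨l, rfl⟩ := Nat.exists_eq_add_of_le hj2
                have hdl := hdec' l (by omega)
                have e2 : i + (2 + l) = p + l := by omega
                have e3 : i + (2 + l + 1) = p + (l + 1) := by omega
                rw [e3, e2]; exact hdl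
            · rcases hend' with heq | hasc
              · left; omega
              · right
                show x (i + (2 * (k + 1) - 1)) < x (i + 2 * (k + 1))
                have e2 : i + (2 * (k + 1) - 1) = p + (2 * k - 1) := by omega
                have e3 : i + 2 * (k + 1) = p + 2 * k := by omega
                rw [e2, e3]; exact hasc
    have := le_dlen x (by omega) hkey
    omega

/-- characterization: increasing prefix + desarrangement tail determines dlen -/
lemma dlen_eq_of {n p : ℕ} {x : ℕ → ℤ} (hpn : p ≤ n)
    (hincr : ∀ i, i + 1 < p → x i < x (i + 1))
    (htail : IsDesar (n - p) (fun i => x (p + i))) : dlen n x = n - p := by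
  have hmem : n - p ≤ dlen n x := by
    apply le_dlen x (by omega)
    have e : n - (n - p) = p := by omega
    rw [e]; exact htail
  obtain ⟨hdn, hdesar⟩ := dlen_spec n x
  by_contra hne
  have hgt : n - p < dlen n x := by omega
  set d := dlen n x with hd
  have hs : n - d < p := by omega
  rcases Nat.lt_or_ge (n - d + 1) p with hlt | hge
  · have hasc : x (n - d) < x (n - d + 1) := hincr _ hlt
    refine not_isDesar_of_asc (m := d) (by omega) ?_ hdesar
    show ¬ x (n - d + 1) < x (n - d + 0)
    have e : n - d + 0 = n - d := by omega
    rw [e]; omega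
  · have hdp : n - d + 1 = p := by omega
    rcases Nat.eq_zero_or_pos (n - p) with h0 | hpos
    · have hd1 : d = 1 := by omega
      rw [hd1] at hdesar
      exact not_isDesar_one _ hdesar
    · have htail' : IsDesar (n - p) (fun i => x (n - d + (i + 1))) := by
        rcases htail with h0 | ⟨k, hk1, hk2, hdec, hend⟩
        · omega
        have hdec' : ∀ j, j + 1 < 2 * k → x (p + (j + 1)) < x (p + j) :=
          fun j hj => hdec j hj
        have hend2 : 2 * k = n - p ∨ x (p + (2 * k - 1)) < x (p + 2 * k) := hend
        refine Or.inr ⟨k, hk1, hk2, ?_, ?_⟩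
        · intro j hj
          show x (n - d + (j + 1 + 1)) < x (n - d + (j + 1))
          have e1 : n - d + (j + 1 + 1) = p + (j + 1) := by omega
          have e2 : n - d + (j + 1) = p + j := by omega
          rw [e1, e2]; exact hdec' j hj
        · rcases hend2 with heq | hasc
          · exact Or.inl heq
          · right
            show x (n - d + (2 * k - 1 + 1)) < x (n - d + (2 * k + 1))
            have e1 : n - d + (2 * k - 1 + 1) = p + (2 * k - 1) := by omega
            have e2 : n - d + (2 * k + 1) = p + 2 * k := by omega
            rw [e1, e2]; exact hasc
      have hcon := not_isDesar_cons (x := fun i => x (n - d + i)) hpos htail'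
      have e : (n - p) + 1 = d := by omega
      rw [e] at hcon
      exact hcon hdesar
-- Section 3: counting desarrangement permutations

/-- decreasing prefix of length (at least) j -/
def DecP (m j : ℕ) (σ : Equiv.Perm (Fin m)) : Prop :=
  ∀ i, i + 1 < j → pword m σ (i + 1) < pword m σ i

lemma pword_lt_iff {m : ℕ} (σ : Equiv.Perm (Fin m)) {i i' : ℕ} (h : i < m) (h' : i' < m) :
    (pword m σ i < pword m σ i') ↔ σ ⟨i, h⟩ < σ ⟨i', h'⟩ := by
  simp only [pword, dif_pos h, dif_pos h', Fin.lt_def]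
  omega

lemma pword_inj {m : ℕ} (σ : Equiv.Perm (Fin m)) {i i' : ℕ} (h : i < m) (h' : i' < m)
    (he : pword m σ i = pword m σ i') : i = i' := by
  simp only [pword, dif_pos h, dif_pos h'] at he
  have h2 : σ ⟨i, h⟩ = σ ⟨i', h'⟩ := by
    apply Fin.ext; omega
  have := σ.injective h2
  simpa [Fin.ext_iff] using this

lemma desc_chain {x : ℕ → ℤ} {j : ℕ} (h : ∀ i, i + 1 < j → x (i + 1) < x i) :
    ∀ a b, a < b → b < j → x b < x a := by
  intro a b
  induction b with
  | zero => omega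
  | succ b ih =>
    intro hab hbj
    rcases Nat.lt_or_ge a b with hab' | hab'
    · exact lt_trans (h b hbj) (ih hab' (by omega))
    · have : a = b := by omega
      subst this
      exact h a hbj

lemma decP_strictAnti {m j : ℕ} {σ : Equiv.Perm (Fin m)} (hj : j ≤ m) (hσ : DecP m j σ)
    {a b : Fin j} (hab : a < b) : σ (Fin.castLE hj b) < σ (Fin.castLE hj a) := by
  have := desc_chain hσ a b hab b.2
  rw [pword_lt_iff σ (by omega) (by omega)] at this
  exact this

def cSet {m j : ℕ} (e : Fin (m - j) ↪ Fin m) : Finset (Fin m) :=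
  Finset.univ \ Finset.univ.image e

lemma cSet_card {m j : ℕ} (hj : j ≤ m) (e : Fin (m - j) ↪ Fin m) : (cSet e).card = j := by
  rw [cSet, Finset.card_sdiff_of_subset (Finset.subset_univ _), Finset.card_univ,
    Finset.card_image_of_injective _ e.injective, Finset.card_univ]
  simp; omega

noncomputable def bFun {m j : ℕ} (hj : j ≤ m) (e : Fin (m - j) ↪ Fin m) : Fin m → Fin m :=
  fun i =>
    if h : (i : ℕ) < j then ((cSet e).orderIsoOfFin (cSet_card hj e) ((⟨(i : ℕ), h⟩ : Fin j).rev) : Fin m)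
    else e ⟨(i : ℕ) - j, by omega⟩

lemma bFun_mem_cSet {m j : ℕ} (hj : j ≤ m) (e : Fin (m - j) ↪ Fin m) (a : Fin j) :
    ((cSet e).orderIsoOfFin (cSet_card hj e) a : Fin m) ∈ cSet e :=
  ((cSet e).orderIsoOfFin (cSet_card hj e) a).2

lemma e_notMem_cSet {m j : ℕ} (e : Fin (m - j) ↪ Fin m) (b : Fin (m - j)) :
    e b ∉ cSet e := by
  intro hb
  rw [cSet, Finset.mem_sdiff] at hb
  exact hb.2 (Finset.mem_image_of_mem _ (Finset.mem_univ b))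

lemma bFun_inj {m j : ℕ} (hj : j ≤ m) (e : Fin (m - j) ↪ Fin m) :
    Function.Injective (bFun hj e) := by
  intro i1 i2 h12
  unfold bFun at h12
  by_cases h1 : (i1 : ℕ) < j <;> by_cases h2 : (i2 : ℕ) < j
  · rw [dif_pos h1, dif_pos h2] at h12
    have h3 := ((cSet e).orderIsoOfFin (cSet_card hj e)).injective (Subtype.ext h12)
    have h4 := Fin.rev_injective h3
    apply Fin.ext
    simpa [Fin.ext_iff] using h4
  · rw [dif_pos h1, dif_neg h2] at h12
    exact absurd (h12 ▸ bFun_mem_cSet hj e (⟨i1, h1⟩ : Fin j).rev) (e_notMem_cSet _ _)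
  · rw [dif_neg h1, dif_pos h2] at h12
    exact absurd (h12.symm ▸ bFun_mem_cSet hj e (⟨i2, h2⟩ : Fin j).rev) (e_notMem_cSet _ _)
  · rw [dif_neg h1, dif_neg h2] at h12
    have h3 := e.injective h12
    apply Fin.ext
    simp only [Fin.ext_iff] at h3
    omega

noncomputable def buildPerm {m j : ℕ} (hj : j ≤ m) (e : Fin (m - j) ↪ Fin m) :
    Equiv.Perm (Fin m) :=
  Equiv.ofBijective (bFun hj e) (Finite.injective_iff_bijective.mp (bFun_inj hj e))

lemma buildPerm_apply {m j : ℕ} (hj : j ≤ m) (e : Fin (m - j) ↪ Fin m) (i : Fin m) :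
    buildPerm hj e i = bFun hj e i := rfl

lemma buildPerm_decP {m j : ℕ} (hj : j ≤ m) (e : Fin (m - j) ↪ Fin m) :
    DecP m j (buildPerm hj e) := by
  intro i hi
  rw [pword_lt_iff _ (by omega) (by omega)]
  show buildPerm hj e ⟨i + 1, by omega⟩ < buildPerm hj e ⟨i, by omega⟩
  rw [buildPerm_apply, buildPerm_apply, bFun, bFun]
  rw [dif_pos (show ((⟨i+1, by omega⟩ : Fin m) : ℕ) < j by exact hi),
    dif_pos (show ((⟨i, by omega⟩ : Fin m) : ℕ) < j by exact Nat.lt_of_succ_lt hi)]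
  have hrev : ((⟨i + 1, hi⟩ : Fin j)).rev < ((⟨i, by omega⟩ : Fin j)).rev := by
    rw [Fin.rev_lt_rev]
    exact Fin.mk_lt_mk.mpr (by omega)
  exact ((cSet e).orderIsoOfFin (cSet_card hj e)).strictMono hrev

/-- permutations with decreasing prefix of length `j` correspond to embeddings. -/
noncomputable def decPEquiv (m j : ℕ) (hj : j ≤ m) :
    {σ : Equiv.Perm (Fin m) // DecP m j σ} ≃ (Fin (m - j) ↪ Fin m) where
  toFun σ := ⟨fun i => σ.1 ⟨j + i, by omega⟩, by
    intro a b hab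
    have := σ.1.injective hab
    simpa [Fin.ext_iff] using this⟩
  invFun e := ⟨buildPerm hj e, buildPerm_decP hj e⟩
  left_inv := by
    rintro ⟨σ, hσ⟩
    apply Subtype.ext
    apply Equiv.ext
    intro i
    set e : Fin (m - j) ↪ Fin m := ⟨fun i => σ ⟨j + i, by omega⟩, by
      intro a b hab
      have := σ.injective hab
      simpa [Fin.ext_iff] using this⟩ with he
    show buildPerm hj e i = σ i
    rw [buildPerm_apply, bFun]
    by_cases h : (i : ℕ) < j
    · rw [dif_pos h]
      -- uniqueness of the decreasing enumeration
      set oC := (cSet e).orderIsoOfFin (cSet_card hj e) with hoC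
      have hchar : ∀ x : Fin m, x ∈ cSet e ↔ ((σ.symm x : Fin m) : ℕ) < j := by
        intro x
        rw [cSet, Finset.mem_sdiff]
        constructor
        · rintro ⟨-, hx⟩
          by_contra hge
          push_neg at hge
          apply hx
          rw [Finset.mem_image]
          refine ⟨⟨((σ.symm x : Fin m) : ℕ) - j, by omega⟩, Finset.mem_univ _, ?_⟩
          show σ ⟨j + (((σ.symm x : Fin m) : ℕ) - j), by omega⟩ = x
          have h5 : (⟨j + (((σ.symm x : Fin m) : ℕ) - j), by omega⟩ : Fin m) = σ.symm x := by
            apply Fin.ext; simp; omega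
          rw [h5, Equiv.apply_symm_apply]
        · intro hx
          refine ⟨Finset.mem_univ _, ?_⟩
          rw [Finset.mem_image]
          rintro ⟨b, -, hb⟩
          have hb' : σ ⟨j + (b : ℕ), by omega⟩ = x := hb
          have h6 : σ.symm x = ⟨j + (b : ℕ), by omega⟩ := by
            rw [← hb']; exact Equiv.symm_apply_apply σ _
          rw [h6] at hx; simp at hx
      set g1 : Fin j → Fin m := fun a => σ (Fin.castLE hj a.rev) with hg1
      set g2 : Fin j → Fin m := fun a => (oC a : Fin m) with hg2
      have hg1mono : StrictMono g1 := by
        intro a b hab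
        exact decP_strictAnti hj hσ (Fin.rev_lt_rev.mpr hab)
      have hg2mono : StrictMono g2 := fun a b hab => oC.strictMono hab
      haveI : WellFoundedLT (Fin j) := Finite.to_wellFoundedLT
      have hrange : Set.range g1 = Set.range g2 := by
        have hr2 : Set.range g2 = ↑(cSet e) := by
          have h1 : Set.range g2 = Subtype.val '' (Set.range oC) := by
            rw [hg2, ← Set.range_comp]; rfl
          rw [h1, oC.surjective.range_eq, Set.image_univ, Subtype.range_coe_subtype]
          ext x; simp
        rw [hr2]
        ext x
        simp only [Set.mem_range, Finset.mem_coe, hchar]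
        constructor
        · rintro ⟨a, rfl⟩
          have h4 : σ.symm (g1 a) = Fin.castLE hj a.rev := by
            rw [hg1]; exact Equiv.symm_apply_apply σ _
          rw [h4]
          simpa using a.rev.isLt
        · intro hx
          refine ⟨(⟨((σ.symm x : Fin m) : ℕ), hx⟩ : Fin j).rev, ?_⟩
          show σ (Fin.castLE hj (⟨((σ.symm x : Fin m) : ℕ), hx⟩ : Fin j).rev.rev) = x
          rw [Fin.rev_rev]
          have h5 : Fin.castLE hj (⟨((σ.symm x : Fin m) : ℕ), hx⟩ : Fin j) = σ.symm x := by
            apply Fin.ext; simp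
          rw [h5, Equiv.apply_symm_apply]
      have hg : g1 = g2 := (StrictMono.range_inj hg1mono hg2mono).mp hrange
      have h7 := congrFun hg ((⟨(i : ℕ), h⟩ : Fin j).rev)
      have h8 : σ (Fin.castLE hj (⟨(i : ℕ), h⟩ : Fin j).rev.rev)
          = ((oC ((⟨(i : ℕ), h⟩ : Fin j).rev)) : Fin m) := h7
      rw [Fin.rev_rev] at h8
      have h9 : Fin.castLE hj (⟨(i : ℕ), h⟩ : Fin j) = i := by apply Fin.ext; simp
      rw [h9] at h8
      exact h8.symm
    · rw [dif_neg h]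
      show σ ⟨j + ((i : ℕ) - j), by omega⟩ = σ i
      congr 1
      apply Fin.ext; simp; omega
  right_inv := by
    intro e
    apply Function.Embedding.ext
    intro b
    show buildPerm hj e ⟨j + b, by omega⟩ = e b
    rw [buildPerm_apply, bFun, dif_neg (by simp)]
    congr 1
    apply Fin.ext; simp

lemma card_decP (m j : ℕ) (hj : j ≤ m) :
    Fintype.card {σ : Equiv.Perm (Fin m) // DecP m j σ} = (j + 1).ascFactorial (m - j) := by
  rw [Fintype.card_congr (decPEquiv m j hj), Fintype.card_embedding_eq, Fintype.card_fin,
    Fintype.card_fin]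
  have := Nat.add_descFactorial_eq_ascFactorial j (m - j)
  rwa [show j + (m - j) = m by omega] at this
def eStat (m : ℕ) (σ : Equiv.Perm (Fin m)) : ℕ := sSup {j | j ≤ m ∧ DecP m j σ}

lemma decP_mono {m j j' : ℕ} {σ : Equiv.Perm (Fin m)} (h : j ≤ j') (hd : DecP m j' σ) :
    DecP m j σ := fun i hi => hd i (by omega)

lemma eStat_spec (m : ℕ) (σ : Equiv.Perm (Fin m)) :
    eStat m σ ≤ m ∧ DecP m (eStat m σ) σ := by
  have h0 : (0 : ℕ) ∈ {j | j ≤ m ∧ DecP m j σ} := ⟨Nat.zero_le m, fun i hi => by omega⟩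
  exact Nat.sSup_mem ⟨0, h0⟩ ⟨m, fun j hj => hj.1⟩

lemma le_eStat {m j : ℕ} {σ : Equiv.Perm (Fin m)} (hj : j ≤ m) (hd : DecP m j σ) :
    j ≤ eStat m σ :=
  le_csSup ⟨m, fun j' hj' => hj'.1⟩ ⟨hj, hd⟩

lemma one_le_eStat {m : ℕ} {σ : Equiv.Perm (Fin m)} (hm : 1 ≤ m) : 1 ≤ eStat m σ :=
  le_eStat hm (fun i hi => by omega)

lemma isDesar_iff_even {m : ℕ} (hm : 1 ≤ m) (σ : Equiv.Perm (Fin m)) :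
    IsDesar m (pword m σ) ↔ Even (eStat m σ) := by
  constructor
  · rintro (h0 | ⟨k, hk1, hk2, hdec, hend⟩)
    · omega
    have hDecP : DecP m (2 * k) σ := hdec
    have hle : 2 * k ≤ eStat m σ := le_eStat (by omega) hDecP
    have hge : eStat m σ ≤ 2 * k := by
      by_contra hgt
      push_neg at hgt
      have hD1 : DecP m (2 * k + 1) σ :=
        decP_mono (by omega) (eStat_spec m σ).2
      rcases hend with heq | hasc
      · have := (eStat_spec m σ).1
        omega
      · have hd := hD1 (2 * k - 1) (by omega)
        have e1 : 2 * k - 1 + 1 = 2 * k := by omega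
        rw [e1] at hd
        exact absurd hasc (not_lt.mpr hd.le)
    have : eStat m σ = 2 * k := by omega
    rw [this]
    exact ⟨k, by omega⟩
  · intro hEven
    obtain ⟨k, hk⟩ := hEven
    set e := eStat m σ with hee
    have hepos : 1 ≤ e := one_le_eStat hm
    have hele : e ≤ m := (eStat_spec m σ).1
    have hDec : DecP m e σ := (eStat_spec m σ).2
    refine Or.inr ⟨k, by omega, by omega, ?_, ?_⟩
    · intro i hi
      exact hDec i (by omega)
    · rcases Nat.eq_or_lt_of_le hele with heq | hlt
      · left; omega
      · right
        have hnD : ¬ DecP m (e + 1) σ := by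
          intro hD
          have := le_eStat (by omega) hD
          omega
        rw [DecP] at hnD
        push_neg at hnD
        obtain ⟨i, hi, hnlt⟩ := hnD
        have hie : i + 1 = e := by
          by_contra hne
          exact absurd (hDec i (by omega)) (not_lt.mpr hnlt)
        have hlt2 : pword m σ i < pword m σ (i + 1) := by
          apply lt_of_le_of_ne hnlt
          intro heq
          have := pword_inj σ (by omega) (by omega) heq.symm
          omega
        have e1 : 2 * k - 1 = i := by omega
        have e2 : 2 * k = i + 1 := by omega
        rw [e1, e2]
        exact hlt2

lemma card_desar (m : ℕ) :
    (Finset.univ.filter (fun σ : Equiv.Perm (Fin m) => IsDesar m (pword m σ))).card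
      = numDerangements m := by
  rcases Nat.eq_zero_or_pos m with rfl | hm
  · have h1 : (Finset.univ.filter (fun σ : Equiv.Perm (Fin 0) => IsDesar 0 (pword 0 σ)))
        = Finset.univ := Finset.filter_true_of_mem (fun σ _ => Or.inl rfl)
    rw [h1, Finset.card_univ, Fintype.card_perm]
    simp [numDerangements_zero]
  -- the "hat" counting function
  set cH : ℕ → ℕ := fun j => if j ≤ m then (j + 1).ascFactorial (m - j) else 0 with hcH
  have hcard_decP : ∀ j, j ≤ m →
      (Finset.univ.filter (fun σ : Equiv.Perm (Fin m) => DecP m j σ)).card = cH j := by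
    intro j hj
    simp only [hcH]
    rw [if_pos hj, ← card_decP m j hj, Fintype.card_subtype]
  have hmono : ∀ j, cH (j + 1) ≤ cH j := by
    intro j
    rcases Nat.lt_or_ge m (j + 1) with h | h
    · have : cH (j + 1) = 0 := by
        simp only [hcH]; rw [if_neg (by omega)]
      rw [this]
      exact Nat.zero_le _
    · rw [← hcard_decP j (by omega), ← hcard_decP (j+1) (by omega)]
      apply Finset.card_le_card
      intro σ hσ
      simp only [Finset.mem_filter, Finset.mem_univ, true_and] at *
      exact decP_mono (by omega) hσ
  -- fibers of eStat
  have hfiber : ∀ j, j ≤ m →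
      (Finset.univ.filter (fun σ : Equiv.Perm (Fin m) => eStat m σ = j)).card
        = cH j - cH (j + 1) := by
    intro j hj
    rcases Nat.eq_or_lt_of_le hj with heq | hlt
    · -- j = m
      have hset : (Finset.univ.filter (fun σ : Equiv.Perm (Fin m) => eStat m σ = j))
          = Finset.univ.filter (fun σ => DecP m j σ) := by
        ext σ
        simp only [Finset.mem_filter, Finset.mem_univ, true_and]
        constructor
        · rintro rfl; exact (eStat_spec m σ).2
        · intro hD
          have h1 := le_eStat hj hD
          have h2 := (eStat_spec m σ).1
          omega
      have h2 : cH (j + 1) = 0 := by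
        simp only [hcH]; rw [if_neg (by omega)]
      rw [hset, hcard_decP j hj, h2]
      omega
    · -- j < m
      have hset : (Finset.univ.filter (fun σ : Equiv.Perm (Fin m) => eStat m σ = j))
          = Finset.univ.filter (fun σ => DecP m j σ)
            \ Finset.univ.filter (fun σ => DecP m (j+1) σ) := by
        ext σ
        simp only [Finset.mem_filter, Finset.mem_univ, true_and, Finset.mem_sdiff]
        constructor
        · rintro rfl
          refine ⟨(eStat_spec m σ).2, ?_⟩
          intro hD
          have := le_eStat (by omega) hD
          omega
        · rintro ⟨hD, hnD⟩
          have h1 := le_eStat hj hD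
          have h2 : eStat m σ ≤ j := by
            by_contra hgt
            exact hnD (decP_mono (by omega) (eStat_spec m σ).2)
          omega
      have hsub : Finset.univ.filter (fun σ : Equiv.Perm (Fin m) => DecP m (j+1) σ)
          ⊆ Finset.univ.filter (fun σ => DecP m j σ) := by
        intro σ hσ
        simp only [Finset.mem_filter, Finset.mem_univ, true_and] at *
        exact decP_mono (by omega) hσ
      rw [hset, Finset.card_sdiff_of_subset hsub, hcard_decP j hj, hcard_decP (j+1) (by omega)]
  -- rewrite the desar filter via parity of eStat
  have hDesarFilter : (Finset.univ.filter (fun σ : Equiv.Perm (Fin m) => IsDesar m (pword m σ)))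
      = Finset.univ.filter (fun σ => Even (eStat m σ)) := by
    ext σ
    simp only [Finset.mem_filter, Finset.mem_univ, true_and]
    exact isDesar_iff_even hm σ
  rw [hDesarFilter]
  -- fiberwise counting
  have hfw := Finset.card_eq_sum_card_fiberwise
    (f := eStat m)
    (s := Finset.univ.filter (fun σ => Even (eStat m σ)))
    (t := Finset.range (m + 1))
    (fun σ _ => Finset.mem_range.mpr (Nat.lt_succ_of_le (eStat_spec m σ).1))
  rw [hfw]
  have hterm : ∀ j ∈ Finset.range (m + 1),
      ((Finset.univ.filter (fun σ : Equiv.Perm (Fin m) => Even (eStat m σ))).filter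
        (fun σ => eStat m σ = j)).card
      = if Even j then cH j - cH (j + 1) else 0 := by
    intro j hj
    rw [Finset.mem_range] at hj
    by_cases hEj : Even j
    · rw [if_pos hEj, ← hfiber j (by omega)]
      congr 1
      ext σ
      simp only [Finset.mem_filter, Finset.mem_univ, true_and]
      constructor
      · rintro ⟨-, h⟩; exact h
      · intro h; exact ⟨h ▸ hEj, h⟩
    · rw [if_neg hEj]
      rw [Finset.card_eq_zero]
      ext σ
      simp only [Finset.mem_filter, Finset.mem_univ, true_and, Finset.notMem_empty,
        iff_false, not_and]
      intro hEv hj'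
      exact hEj (hj' ▸ hEv)
  rw [Finset.sum_congr rfl hterm]
  -- pass to ℤ and pair up
  have hpair : ∀ (g : ℕ → ℤ) (K : ℕ),
      ∑ i ∈ Finset.range (2 * K), g i = ∑ k ∈ Finset.range K, (g (2 * k) + g (2 * k + 1)) := by
    intro g K
    induction K with
    | zero => simp
    | succ K ih =>
      rw [Finset.sum_range_succ, ← ih, show 2 * (K + 1) = 2 * K + 1 + 1 by omega,
        Finset.sum_range_succ, Finset.sum_range_succ]
      ring
  have hzero : ∀ j, m < j → cH j = 0 := by
    intro j hj
    simp only [hcH]; rw [if_neg (by omega)]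
  -- extend ℕ-sum to range (2*(m+1))
  have hext : ∑ j ∈ Finset.range (m + 1), (if Even j then cH j - cH (j + 1) else 0)
      = ∑ j ∈ Finset.range (2 * (m + 1)), (if Even j then cH j - cH (j + 1) else 0) := by
    apply Finset.sum_subset
    · intro j hj
      rw [Finset.mem_range] at *
      omega
    · intro j hj hj'
      rw [Finset.mem_range] at *
      have h1 : cH j = 0 := hzero j (by omega)
      have h2 : cH (j + 1) = 0 := hzero (j + 1) (by omega)
      rw [h1, h2]
      simp
  rw [hext]
  -- now compare with numDerangements_sum over ℤ
  have hcast : ((∑ j ∈ Finset.range (2 * (m + 1)),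
      (if Even j then cH j - cH (j + 1) else 0) : ℕ) : ℤ)
      = ∑ j ∈ Finset.range (2 * (m + 1)),
        (if Even j then (cH j : ℤ) - (cH (j + 1) : ℤ) else 0) := by
    push_cast
    apply Finset.sum_congr rfl
    intro j hj
    by_cases hEj : Even j
    · rw [if_pos hEj, if_pos hEj]
      have := hmono j
      omega
    · rw [if_neg hEj, if_neg hEj]
  have hint : ∑ j ∈ Finset.range (2 * (m + 1)),
      (if Even j then (cH j : ℤ) - (cH (j + 1) : ℤ) else 0)
      = ∑ j ∈ Finset.range (2 * (m + 1)), (-1 : ℤ) ^ j * (cH j : ℤ) := by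
    rw [hpair _ (m + 1), hpair _ (m + 1)]
    apply Finset.sum_congr rfl
    intro k hk
    have hE : Even (2 * k) := ⟨k, by omega⟩
    have hO : ¬ Even (2 * k + 1) := by simp [Nat.even_add_one, hE]
    rw [if_pos hE, if_neg hO]
    have h1 : (-1 : ℤ) ^ (2 * k) = 1 := by
      rw [pow_mul]; norm_num
    have h2 : (-1 : ℤ) ^ (2 * k + 1) = -1 := by
      rw [pow_succ, h1]; ring
    rw [h1, h2]
    ring
  have hnum : (numDerangements m : ℤ)
      = ∑ j ∈ Finset.range (2 * (m + 1)), (-1 : ℤ) ^ j * (cH j : ℤ) := by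
    rw [numDerangements_sum]
    have h1 : ∀ j ∈ Finset.range (m + 1),
        (-1 : ℤ) ^ j * (Nat.ascFactorial (j + 1) (m - j) : ℤ)
          = (-1 : ℤ) ^ j * (cH j : ℤ) := by
      intro j hj
      rw [Finset.mem_range] at hj
      simp only [hcH]
      rw [if_pos (by omega)]
    rw [Finset.sum_congr rfl h1]
    apply Finset.sum_subset (Finset.range_subset_range.mpr (by omega))
    intro j hj hj'
    rw [Finset.mem_range] at *
    rw [hzero j (by omega)]
    ring
  have : ((∑ j ∈ Finset.range (2 * (m + 1)),
      (if Even j then cH j - cH (j + 1) else 0) : ℕ) : ℤ) = (numDerangements m : ℤ) := by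
    rw [hcast, hint, hnum]
  exact_mod_cast this

lemma card_desar' (m : ℕ) :
    Fintype.card {σ : Equiv.Perm (Fin m) // IsDesar m (pword m σ)} = numDerangements m := by
  rw [Fintype.card_subtype, card_desar]
-- Section 0: translation between signed permutations and plain permutations

/-- the signed letter with absolute value `a+1`, negative iff `-(a+1) ∈ N` -/
def sgnL (N : Finset ℤ) (n : ℕ) (a : Fin n) : ℤ :=
  if -((a : ℤ) + 1) ∈ N then -((a : ℤ) + 1) else ((a : ℤ) + 1)

lemma sgnL_natAbs {N : Finset ℤ} {n : ℕ} (a : Fin n) : (sgnL N n a).natAbs = (a : ℕ) + 1 := by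
  rw [sgnL]; split <;> omega

lemma sgnL_ne_zero {N : Finset ℤ} {n : ℕ} (a : Fin n) : sgnL N n a ≠ 0 := by
  rw [sgnL]; split <;> omega

lemma sgnL_inj {N : Finset ℤ} {n : ℕ} {a b : Fin n} (h : sgnL N n a = sgnL N n b) : a = b := by
  have := congrArg Int.natAbs h
  rw [sgnL_natAbs, sgnL_natAbs] at this
  exact Fin.ext (by omega)

lemma sgnL_neg {N : Finset ℤ} {n : ℕ} {a : Fin n} (h : -((a : ℤ) + 1) ∈ N) :
    sgnL N n a = -((a : ℤ) + 1) := if_pos h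

lemma sgnL_pos {N : Finset ℤ} {n : ℕ} {a : Fin n} (h : -((a : ℤ) + 1) ∉ N) :
    sgnL N n a = ((a : ℤ) + 1) := if_neg h

/-- the word of the signed permutation determined by `τ` and the sign set `N` -/
def wN (N : Finset ℤ) (n : ℕ) (τ : Equiv.Perm (Fin n)) : ℕ → ℤ :=
  fun i => if h : i < n then sgnL N n (τ ⟨i, h⟩) else 0

lemma wN_apply' {N : Finset ℤ} {n : ℕ} (τ : Equiv.Perm (Fin n)) (i : ℕ) (h : i < n) :
    wN N n τ i = sgnL N n (τ ⟨i, h⟩) := by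
  rw [wN, dif_pos h]

lemma wN_inj {N : Finset ℤ} {n : ℕ} (τ : Equiv.Perm (Fin n)) {i j : ℕ}
    (hi : i < n) (hj : j < n) (h : wN N n τ i = wN N n τ j) : i = j := by
  rw [wN_apply' τ i hi, wN_apply' τ j hj] at h
  have := τ.injective (sgnL_inj h)
  simpa [Fin.ext_iff] using this

lemma sword_apply {n : ℕ} (w : Equiv.Perm (Fin n) × (Fin n → Bool)) (i : ℕ) (h : i < n) :
    sword n w i
      = if w.2 ⟨i, h⟩ then -((w.1 ⟨i, h⟩ : ℤ) + 1) else ((w.1 ⟨i, h⟩ : ℤ) + 1) := by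
  rw [sword, dif_pos h]

-- membership lemmas
lemma mem_NegSet_iff {n : ℕ} (x : ℕ → ℤ) (z : ℤ) :
    z ∈ NegSet n x ↔ ∃ i, i < n ∧ x i < 0 ∧ x i = z := by
  unfold NegSet
  rw [Finset.mem_image]
  constructor
  · rintro ⟨i, hi, h3⟩
    rw [Finset.mem_filter, Finset.mem_range] at hi
    exact ⟨i, hi.1, hi.2, h3⟩
  · rintro ⟨i, h1, h2, h3⟩
    exact ⟨i, by rw [Finset.mem_filter, Finset.mem_range]; exact ⟨h1, h2⟩, h3⟩

lemma mem_castBind (s : Finset ℕ) (i : ℤ) :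
    (i ∈ (s >>= fun a => (pure ((a : ℕ) : ℤ) : Finset ℤ))) ↔ ∃ a ∈ s, ((a : ℕ) : ℤ) = i := by
  have hb := congrFun (congrFun (@Finset.bind_def Classical.propDecidable ℤ ℕ) s)
    (fun a => (pure ((a : ℕ) : ℤ) : Finset ℤ))
  rw [hb]
  simp only [Finset.mem_sup, Finset.pure_def, Finset.mem_singleton]
  constructor
  · rintro ⟨a, ha, rfl⟩; exact ⟨a, ha, rfl⟩
  · rintro ⟨a, ha, rfl⟩; exact ⟨a, ha, rfl⟩

lemma mem_FixMinusSet_iff {n : ℕ} (x : ℕ → ℤ) (z : ℤ) :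
    z ∈ FixMinusSet n x ↔ ∃ i, i < n ∧ x i = -((i : ℤ) + 1) ∧ z = -((i : ℤ) + 1) := by
  unfold FixMinusSet
  rw [Finset.mem_image]
  constructor
  · rintro ⟨i, hi, h3⟩
    rw [mem_castBind] at hi
    obtain ⟨a, ha, rfl⟩ := hi
    rw [Finset.mem_filter, Finset.mem_range] at ha
    exact ⟨a, ha.1, ha.2, h3.symm⟩
  · rintro ⟨a, h1, h2, h3⟩
    exact ⟨(a : ℤ), (mem_castBind _ _).mpr ⟨a, by
      rw [Finset.mem_filter, Finset.mem_range]; exact ⟨h1, h2⟩, rfl⟩, h3.symm⟩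

lemma mem_FixPlusSet_iff {n : ℕ} (x : ℕ → ℤ) (z : ℤ) :
    z ∈ FixPlusSet n x ↔ ∃ i, i < n ∧ x i = ((i : ℤ) + 1) ∧ z = ((i : ℤ) + 1) := by
  unfold FixPlusSet
  rw [Finset.mem_image]
  constructor
  · rintro ⟨i, hi, h3⟩
    rw [mem_castBind] at hi
    obtain ⟨a, ha, rfl⟩ := hi
    rw [Finset.mem_filter, Finset.mem_range] at ha
    exact ⟨a, ha.1, ha.2, h3.symm⟩
  · rintro ⟨a, h1, h2, h3⟩
    exact ⟨(a : ℤ), (mem_castBind _ _).mpr ⟨a, by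
      rw [Finset.mem_filter, Finset.mem_range]; exact ⟨h1, h2⟩, rfl⟩, h3.symm⟩

lemma mem_PixMinusSet_iff {n : ℕ} (x : ℕ → ℤ) (z : ℤ) :
    z ∈ PixMinusSet n x ↔ ∃ i, i < n - dlen n x ∧ x i < 0 ∧ x i = z := by
  unfold PixMinusSet
  rw [Finset.mem_image]
  constructor
  · rintro ⟨i, hi, h3⟩
    rw [Finset.mem_filter, Finset.mem_range] at hi
    exact ⟨i, hi.1, hi.2, h3⟩
  · rintro ⟨i, h1, h2, h3⟩
    exact ⟨i, by rw [Finset.mem_filter, Finset.mem_range]; exact ⟨h1, h2⟩, h3⟩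

lemma mem_PixPlusSet_iff {n : ℕ} (x : ℕ → ℤ) (z : ℤ) :
    z ∈ PixPlusSet n x ↔ ∃ i, i < n - dlen n x ∧ 0 < x i ∧ x i = z := by
  unfold PixPlusSet
  rw [Finset.mem_image]
  constructor
  · rintro ⟨i, hi, h3⟩
    rw [Finset.mem_filter, Finset.mem_range] at hi
    exact ⟨i, hi.1, hi.2, h3⟩
  · rintro ⟨i, h1, h2, h3⟩
    exact ⟨i, by rw [Finset.mem_filter, Finset.mem_range]; exact ⟨h1, h2⟩, h3⟩

lemma sword_neg_iff {n : ℕ} (w : Equiv.Perm (Fin n) × (Fin n → Bool)) (i : ℕ) (h : i < n) :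
    sword n w i < 0 ↔ w.2 ⟨i, h⟩ = true := by
  rw [sword_apply w i h]
  by_cases hb : w.2 ⟨i, h⟩ = true
  · rw [hb]; simp; omega
  · simp only [Bool.not_eq_true] at hb
    rw [hb]; simp; omega

lemma sword_val_neg {n : ℕ} {w : Equiv.Perm (Fin n) × (Fin n → Bool)} {i : ℕ} (h : i < n)
    (hneg : sword n w i < 0) : sword n w i = -((w.1 ⟨i, h⟩ : ℤ) + 1) := by
  have hb := (sword_neg_iff w i h).mp hneg
  rw [sword_apply w i h, hb]
  simp

lemma sword_val_pos {n : ℕ} {w : Equiv.Perm (Fin n) × (Fin n → Bool)} {i : ℕ} (h : i < n)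
    (hpos : 0 < sword n w i) : sword n w i = ((w.1 ⟨i, h⟩ : ℤ) + 1) ∧ w.2 ⟨i, h⟩ = false := by
  have hb : w.2 ⟨i, h⟩ = false := by
    by_contra hb
    simp only [Bool.not_eq_false] at hb
    have := (sword_neg_iff w i h).mpr hb
    omega
  rw [sword_apply w i h, hb]
  simp

lemma mem_NegSet_sword {n : ℕ} (w : Equiv.Perm (Fin n) × (Fin n → Bool)) (z : ℤ) :
    z ∈ NegSet n (sword n w) ↔ ∃ i : Fin n, w.2 i = true ∧ z = -((w.1 i : ℤ) + 1) := by
  rw [mem_NegSet_iff]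
  constructor
  · rintro ⟨i, h1, h2, h3⟩
    exact ⟨⟨i, h1⟩, (sword_neg_iff w i h1).mp h2, by rw [← h3, sword_val_neg h1 h2]⟩
  · rintro ⟨i, h1, h2⟩
    refine ⟨(i : ℕ), i.2, ?_, ?_⟩
    · rw [sword_apply w (i : ℕ) i.2]
      simp only [Fin.eta]
      rw [h1]; simp; omega
    · rw [sword_apply w (i : ℕ) i.2]
      simp only [Fin.eta]
      rw [h1]; simp [h2]

lemma sword_eq_wN {n : ℕ} {N : Finset ℤ} {w : Equiv.Perm (Fin n) × (Fin n → Bool)}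
    (h : ∀ i : Fin n, w.2 i = true ↔ -((w.1 i : ℤ) + 1) ∈ N) :
    sword n w = wN N n w.1 := by
  funext i
  by_cases hin : i < n
  · rw [wN_apply' w.1 i hin, sword_apply w i hin, sgnL]
    by_cases hb : w.2 ⟨i, hin⟩ = true
    · rw [if_pos hb, if_pos ((h _).mp hb)]
    · rw [if_neg (by simpa using hb), if_neg (fun hc => hb ((h _).mpr hc))]
  · rw [sword, wN, dif_neg hin, dif_neg hin]

lemma negSet_eq_iff {n : ℕ} {N : Finset ℤ} {w : Equiv.Perm (Fin n) × (Fin n → Bool)}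
    (hN : ∀ z ∈ N, ∃ a : Fin n, z = -((a : ℤ) + 1)) :
    NegSet n (sword n w) = N ↔ ∀ i : Fin n, (w.2 i = true ↔ -((w.1 i : ℤ) + 1) ∈ N) := by
  constructor
  · intro hEq i
    constructor
    · intro hb
      rw [← hEq, mem_NegSet_sword]
      exact ⟨i, hb, rfl⟩
    · intro hmem
      rw [← hEq, mem_NegSet_sword] at hmem
      obtain ⟨j, hj, hval⟩ := hmem
      have : w.1 j = w.1 i := by
        apply Fin.ext
        omega
      have := w.1.injective this
      rwa [this] at hj
  · intro h
    ext z
    rw [mem_NegSet_sword]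
    constructor
    · rintro ⟨i, hb, rfl⟩
      exact (h i).mp hb
    · intro hz
      obtain ⟨a, rfl⟩ := hN z hz
      refine ⟨w.1.symm a, ?_, ?_⟩
      · rw [h (w.1.symm a), Equiv.apply_symm_apply]
        exact hz
      · rw [Equiv.apply_symm_apply]

/-- for any `τ`, the word `wN N n τ` has negative-letter set `N`, provided `N` is good -/
lemma negSet_wN {n : ℕ} {N : Finset ℤ} (hN : ∀ z ∈ N, ∃ a : Fin n, z = -((a : ℤ) + 1))
    (τ : Equiv.Perm (Fin n)) : NegSet n (wN N n τ) = N := by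
  have hiff : ∀ i : Fin n,
      ((fun i => decide (-((τ i : ℤ) + 1) ∈ N)) i = true ↔ -((τ i : ℤ) + 1) ∈ N) :=
    fun i => decide_eq_true_iff
  have hsw : sword n (τ, fun i => decide (-((τ i : ℤ) + 1) ∈ N)) = wN N n τ :=
    sword_eq_wN hiff
  rw [← hsw]
  exact (negSet_eq_iff hN).mpr hiff

/-- signed permutations with a fixed (good) negative-letter set, satisfying a further
condition on the word, correspond to plain permutations -/
noncomputable def negFiberEquiv (n : ℕ) (N : Finset ℤ)
    (hN : ∀ z ∈ N, ∃ a : Fin n, z = -((a : ℤ) + 1)) (R : (ℕ → ℤ) → Prop) :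
    {w : Equiv.Perm (Fin n) × (Fin n → Bool) //
        NegSet n (sword n w) = N ∧ R (sword n w)}
      ≃ {τ : Equiv.Perm (Fin n) // R (wN N n τ)} where
  toFun w := ⟨w.1.1, by
    have hsw := sword_eq_wN ((negSet_eq_iff hN).mp w.2.1)
    rw [← hsw]
    exact w.2.2⟩
  invFun τ := ⟨(τ.1, fun i => decide (-((τ.1 i : ℤ) + 1) ∈ N)), by
    have hiff : ∀ i : Fin n,
        ((fun i => decide (-((τ.1 i : ℤ) + 1) ∈ N)) i = true ↔ -((τ.1 i : ℤ) + 1) ∈ N) :=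
      fun i => decide_eq_true_iff
    have hsw : sword n (τ.1, fun i => decide (-((τ.1 i : ℤ) + 1) ∈ N)) = wN N n τ.1 :=
      sword_eq_wN hiff
    rw [hsw]
    exact ⟨negSet_wN hN τ.1, τ.2⟩⟩
  left_inv := by
    rintro ⟨⟨σ, ε⟩, hNeg, hR⟩
    apply Subtype.ext
    apply Prod.ext
    · rfl
    · funext i
      have h : ε i = true ↔ -((σ i : ℤ) + 1) ∈ N := (negSet_eq_iff hN).mp hNeg i
      show decide (-((σ i : ℤ) + 1) ∈ N) = ε i
      cases hb : ε i
      · rw [hb] at h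
        simp only [Bool.false_eq_true, false_iff] at h
        simpa using h
      · rw [hb] at h
        simp only [true_iff] at h
        simpa using h
  right_inv := by
    intro τ
    apply Subtype.ext
    rfl
-- Section 2: the Fix side

/-- the compatibility condition a triple of sets must satisfy -/
def GoodT (n : ℕ) (t : Finset ℤ × Finset ℤ × Finset ℤ) : Prop :=
  (∀ z ∈ t.2.2, ∃ a : Fin n, z = -((a : ℤ) + 1)) ∧ (t.1 ⊆ t.2.2) ∧
    (∀ z ∈ t.2.1, ∃ a : Fin n, z = ((a : ℤ) + 1) ∧ -((a : ℤ) + 1) ∉ t.2.2)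

/-- the set of positions that are forced to be fixed points -/
def F0 (n : ℕ) (t : Finset ℤ × Finset ℤ × Finset ℤ) : Finset (Fin n) :=
  Finset.univ.filter (fun a => sgnL t.2.2 n a ∈ t.1 ∪ t.2.1)

lemma neg_of_mem_N {n : ℕ} {t : Finset ℤ × Finset ℤ × Finset ℤ} (hG : GoodT n t)
    {z : ℤ} (hz : z ∈ t.2.2) : z < 0 := by
  obtain ⟨a, rfl⟩ := hG.1 z hz
  omega

lemma pos_of_mem_Fp {n : ℕ} {t : Finset ℤ × Finset ℤ × Finset ℤ} (hG : GoodT n t)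
    {z : ℤ} (hz : z ∈ t.2.1) : 0 < z := by
  obtain ⟨a, ha, -⟩ := hG.2.2 z hz
  omega

lemma F0_card_le (n : ℕ) (t : Finset ℤ × Finset ℤ × Finset ℤ) : (F0 n t).card ≤ n := by
  calc (F0 n t).card ≤ Finset.univ.card := Finset.card_filter_le _ _
  _ = n := by rw [Finset.card_univ, Fintype.card_fin]

lemma goodT_fix {n : ℕ} (w : Equiv.Perm (Fin n) × (Fin n → Bool)) :
    GoodT n (FixMinusSet n (sword n w), FixPlusSet n (sword n w), NegSet n (sword n w)) := by
  refine ⟨?_, ?_, ?_⟩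
  · intro z hz
    rw [mem_NegSet_sword] at hz
    obtain ⟨i, -, rfl⟩ := hz
    exact ⟨w.1 i, rfl⟩
  · intro z hz
    rw [mem_FixMinusSet_iff] at hz
    obtain ⟨i, h1, h2, rfl⟩ := hz
    rw [mem_NegSet_iff]
    exact ⟨i, h1, by omega, h2⟩
  · intro z hz
    rw [mem_FixPlusSet_iff] at hz
    obtain ⟨i, h1, h2, rfl⟩ := hz
    have hpos : 0 < sword n w i := by omega
    obtain ⟨hval, hb⟩ := sword_val_pos h1 hpos
    refine ⟨w.1 ⟨i, h1⟩, by omega, ?_⟩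
    rw [mem_NegSet_sword]
    rintro ⟨j, hbj, heq⟩
    have : w.1 j = w.1 ⟨i, h1⟩ := Fin.ext (by omega)
    have := w.1.injective this
    rw [this] at hbj
    rw [hb] at hbj
    exact absurd hbj (by simp)

lemma goodT_pix {n : ℕ} (w : Equiv.Perm (Fin n) × (Fin n → Bool)) :
    GoodT n (PixMinusSet n (sword n w), PixPlusSet n (sword n w), NegSet n (sword n w)) := by
  refine ⟨?_, ?_, ?_⟩
  · intro z hz
    rw [mem_NegSet_sword] at hz
    obtain ⟨i, -, rfl⟩ := hz
    exact ⟨w.1 i, rfl⟩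
  · intro z hz
    rw [mem_PixMinusSet_iff] at hz
    obtain ⟨i, h1, h2, h3⟩ := hz
    rw [mem_NegSet_iff]
    exact ⟨i, by omega, h2, h3⟩
  · intro z hz
    rw [mem_PixPlusSet_iff] at hz
    obtain ⟨i, h1, h2, h3⟩ := hz
    have hin : i < n := by omega
    obtain ⟨hval, hb⟩ := sword_val_pos hin h2
    refine ⟨w.1 ⟨i, hin⟩, by omega, ?_⟩
    rw [mem_NegSet_sword]
    rintro ⟨j, hbj, heq⟩
    have : w.1 j = w.1 ⟨i, hin⟩ := Fin.ext (by omega)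
    have := w.1.injective this
    rw [this] at hbj
    rw [hb] at hbj
    exact absurd hbj (by simp)

lemma wN_applyF {N : Finset ℤ} {n : ℕ} (τ : Equiv.Perm (Fin n)) (i : Fin n) :
    wN N n τ (i : ℕ) = sgnL N n (τ i) := wN_apply' τ (i : ℕ) i.2

lemma natAbs_neg_succ (c : ℤ) (h : 0 ≤ c) : (-(c + 1)).natAbs = c.natAbs + 1 := by omega

/-- characterization of the Fix-statistics of `wN N n τ` -/
lemma wN_fix_iff {n : ℕ} {t : Finset ℤ × Finset ℤ × Finset ℤ} (hG : GoodT n t)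
    (τ : Equiv.Perm (Fin n)) :
    (FixMinusSet n (wN t.2.2 n τ) = t.1 ∧ FixPlusSet n (wN t.2.2 n τ) = t.2.1)
      ↔ (∀ a : Fin n, τ a = a ↔ a ∈ F0 n t) := by
  set N := t.2.2 with hNdef
  have hc1 : ∀ i : Fin n, (wN N n τ (i : ℕ) = -((i : ℤ) + 1))
      ↔ (τ i = i ∧ -((i : ℤ) + 1) ∈ N) := by
    intro i
    rw [wN_applyF]
    constructor
    · intro h
      have hAbs := congrArg Int.natAbs h
      rw [sgnL_natAbs] at hAbs
      have hfix : τ i = i := Fin.ext (by omega)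
      rw [hfix] at h ⊢
      refine ⟨rfl, ?_⟩
      by_contra hmem
      rw [sgnL_pos hmem] at h
      omega
    · rintro ⟨hfix, hmem⟩
      rw [hfix, sgnL_neg hmem]
  have hc2 : ∀ i : Fin n, (wN N n τ (i : ℕ) = ((i : ℤ) + 1))
      ↔ (τ i = i ∧ -((i : ℤ) + 1) ∉ N) := by
    intro i
    rw [wN_applyF]
    constructor
    · intro h
      have hAbs := congrArg Int.natAbs h
      rw [sgnL_natAbs] at hAbs
      have hfix : τ i = i := Fin.ext (by omega)
      rw [hfix] at h ⊢
      refine ⟨rfl, ?_⟩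
      intro hmem
      rw [sgnL_neg hmem] at h
      omega
    · rintro ⟨hfix, hmem⟩
      rw [hfix, sgnL_pos hmem]
  constructor
  · rintro ⟨hFm, hFp⟩ a
    constructor
    · intro hfix
      rw [F0, Finset.mem_filter]
      refine ⟨Finset.mem_univ a, ?_⟩
      by_cases hmem : -((a : ℤ) + 1) ∈ N
      · rw [sgnL_neg hmem]
        apply Finset.mem_union_left
        rw [← hFm, mem_FixMinusSet_iff]
        exact ⟨(a : ℕ), a.2, (hc1 a).mpr ⟨hfix, hmem⟩, rfl⟩
      · rw [sgnL_pos hmem]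
        apply Finset.mem_union_right
        rw [← hFp, mem_FixPlusSet_iff]
        exact ⟨(a : ℕ), a.2, (hc2 a).mpr ⟨hfix, hmem⟩, rfl⟩
    · intro hmem
      rw [F0, Finset.mem_filter] at hmem
      rcases Finset.mem_union.mp hmem.2 with hm | hm
      · rw [← hFm, mem_FixMinusSet_iff] at hm
        obtain ⟨i, h1, h2, h3⟩ := hm
        obtain ⟨hfix, hmem2⟩ := (hc1 ⟨i, h1⟩).mp h2
        have : sgnL N n a = sgnL N n ⟨i, h1⟩ := by rw [h3, sgnL_neg hmem2]
        have ha := sgnL_inj this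
        rw [ha]
        exact hfix
      · rw [← hFp, mem_FixPlusSet_iff] at hm
        obtain ⟨i, h1, h2, h3⟩ := hm
        obtain ⟨hfix, hmem2⟩ := (hc2 ⟨i, h1⟩).mp h2
        have : sgnL N n a = sgnL N n ⟨i, h1⟩ := by rw [h3, sgnL_pos hmem2]
        have ha := sgnL_inj this
        rw [ha]
        exact hfix
  · intro hfix
    constructor
    · ext z
      rw [mem_FixMinusSet_iff]
      constructor
      · rintro ⟨i, h1, h2, rfl⟩
        obtain ⟨hf, hmem⟩ := (hc1 ⟨i, h1⟩).mp h2
        have hF0 : (⟨i, h1⟩ : Fin n) ∈ F0 n t := by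
          rw [← hfix]
          exact hf
        rw [F0, Finset.mem_filter] at hF0
        rcases Finset.mem_union.mp hF0.2 with hm | hm
        · rwa [sgnL_neg hmem] at hm
        · rw [sgnL_neg hmem] at hm
          have := pos_of_mem_Fp hG hm
          omega
      · intro hz
        have hzN : z ∈ N := hG.2.1 hz
        obtain ⟨a, rfl⟩ := hG.1 z hzN
        have hF0 : a ∈ F0 n t := by
          rw [F0, Finset.mem_filter]
          exact ⟨Finset.mem_univ a, by rw [sgnL_neg hzN]; exact Finset.mem_union_left _ hz⟩
        have hf : τ a = a := (hfix a).mpr hF0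
        exact ⟨(a : ℕ), a.2, (hc1 a).mpr ⟨hf, hzN⟩, rfl⟩
    · ext z
      rw [mem_FixPlusSet_iff]
      constructor
      · rintro ⟨i, h1, h2, rfl⟩
        obtain ⟨hf, hmem⟩ := (hc2 ⟨i, h1⟩).mp h2
        have hF0 : (⟨i, h1⟩ : Fin n) ∈ F0 n t := by
          rw [← hfix]
          exact hf
        rw [F0, Finset.mem_filter] at hF0
        rcases Finset.mem_union.mp hF0.2 with hm | hm
        · rw [sgnL_pos hmem] at hm
          have := neg_of_mem_N hG (hG.2.1 hm)
          omega
        · rwa [sgnL_pos hmem] at hm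
      · intro hz
        obtain ⟨a, haz, hmem⟩ := hG.2.2 z hz
        have hF0 : a ∈ F0 n t := by
          rw [F0, Finset.mem_filter]
          refine ⟨Finset.mem_univ a, ?_⟩
          rw [sgnL_pos hmem, ← haz]
          exact Finset.mem_union_right _ hz
        have hf : τ a = a := (hfix a).mpr hF0
        exact ⟨(a : ℕ), a.2, (hc2 a).mpr ⟨hf, hmem⟩, by omega⟩

/-- counting the Fix-side fiber -/
lemma TCount (n : ℕ) (t : Finset ℤ × Finset ℤ × Finset ℤ) (hG : GoodT n t) :
    Fintype.card {w : Equiv.Perm (Fin n) × (Fin n → Bool) //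
        (FixMinusSet n (sword n w), FixPlusSet n (sword n w), NegSet n (sword n w)) = t}
      = numDerangements (n - (F0 n t).card) := by
  have e1 : {w : Equiv.Perm (Fin n) × (Fin n → Bool) //
        (FixMinusSet n (sword n w), FixPlusSet n (sword n w), NegSet n (sword n w)) = t}
      ≃ {w : Equiv.Perm (Fin n) × (Fin n → Bool) //
        NegSet n (sword n w) = t.2.2 ∧ (FixMinusSet n (sword n w) = t.1
          ∧ FixPlusSet n (sword n w) = t.2.1)} := by
    apply Equiv.subtypeEquivRight
    intro w
    rw [Prod.ext_iff, Prod.ext_iff]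
    tauto
  have e2 := negFiberEquiv n t.2.2 hG.1
    (fun x => FixMinusSet n x = t.1 ∧ FixPlusSet n x = t.2.1)
  have e3 : {τ : Equiv.Perm (Fin n) //
        FixMinusSet n (wN t.2.2 n τ) = t.1 ∧ FixPlusSet n (wN t.2.2 n τ) = t.2.1}
      ≃ {τ : Equiv.Perm (Fin n) // ∀ a : Fin n, ¬ (a ∉ F0 n t) ↔ a ∈ Function.fixedPoints ⇑τ} := by
    apply Equiv.subtypeEquivRight
    intro τ
    rw [wN_fix_iff hG]
    constructor
    · intro h a
      rw [not_not]
      exact ((h a).symm : a ∈ F0 n t ↔ τ a = a)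
    · intro h a
      have := h a
      rw [not_not] at this
      exact this.symm
  have e4 := (derangements.subtypeEquiv (fun a : Fin n => a ∉ F0 n t)).symm
  have := Fintype.card_congr (((e1.trans e2).trans e3).trans e4)
  rw [this, card_derangements_eq_numDerangements]
  congr 1
  rw [Fintype.card_subtype_compl, Fintype.card_fin, Fintype.card_coe]
-- Section 4: the Pix side machinery

lemma isDesar_congr {m : ℕ} {x y : ℕ → ℤ}
    (h : ∀ i j, i < m → j < m → (x i < x j ↔ y i < y j)) (hx : IsDesar m x) :
    IsDesar m y := by
  rcases hx with rfl | ⟨k, hk1, hk2, hdec, hend⟩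
  · exact Or.inl rfl
  refine Or.inr ⟨k, hk1, hk2, ?_, ?_⟩
  · intro i hi
    exact (h (i + 1) i (by omega) (by omega)).mp (hdec i hi)
  · rcases hend with heq | hasc
    · exact Or.inl heq
    · by_cases h2k : 2 * k = m
      · exact Or.inl h2k
      · exact Or.inr ((h (2 * k - 1) (2 * k) (by omega) (by omega)).mp hasc)

def Lset (n : ℕ) (t : Finset ℤ × Finset ℤ × Finset ℤ) : Finset ℤ :=
  (F0 n t).image (sgnL t.2.2 n)

lemma Lset_card (n : ℕ) (t : Finset ℤ × Finset ℤ × Finset ℤ) :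
    (Lset n t).card = (F0 n t).card :=
  Finset.card_image_of_injOn (fun a _ b _ h => sgnL_inj h)

lemma Lset_eq {n : ℕ} {t : Finset ℤ × Finset ℤ × Finset ℤ} (hG : GoodT n t) :
    Lset n t = t.1 ∪ t.2.1 := by
  ext z
  rw [Lset, Finset.mem_image]
  constructor
  · rintro ⟨a, ha, rfl⟩
    rw [F0, Finset.mem_filter] at ha
    exact ha.2
  · intro hz
    rcases Finset.mem_union.mp hz with hm | hm
    · have hzN := hG.2.1 hm
      obtain ⟨a, rfl⟩ := hG.1 _ hzN
      refine ⟨a, ?_, sgnL_neg hzN⟩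
      rw [F0, Finset.mem_filter]
      exact ⟨Finset.mem_univ a, by rw [sgnL_neg hzN]; exact hz⟩
    · obtain ⟨a, rfl, hmem⟩ := hG.2.2 _ hm
      refine ⟨a, ?_, sgnL_pos hmem⟩
      rw [F0, Finset.mem_filter]
      exact ⟨Finset.mem_univ a, by rw [sgnL_pos hmem]; exact hz⟩

lemma mem_Fm_iff {n : ℕ} {t : Finset ℤ × Finset ℤ × Finset ℤ} (hG : GoodT n t) (z : ℤ) :
    z ∈ t.1 ↔ z ∈ Lset n t ∧ z < 0 := by
  rw [Lset_eq hG]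
  constructor
  · intro h
    exact ⟨Finset.mem_union_left _ h, neg_of_mem_N hG (hG.2.1 h)⟩
  · rintro ⟨hm, hneg⟩
    rcases Finset.mem_union.mp hm with h | h
    · exact h
    · have := pos_of_mem_Fp hG h
      omega

lemma mem_Fp_iff {n : ℕ} {t : Finset ℤ × Finset ℤ × Finset ℤ} (hG : GoodT n t) (z : ℤ) :
    z ∈ t.2.1 ↔ z ∈ Lset n t ∧ 0 < z := by
  rw [Lset_eq hG]
  constructor
  · intro h
    exact ⟨Finset.mem_union_right _ h, pos_of_mem_Fp hG h⟩
  · rintro ⟨hm, hpos⟩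
    rcases Finset.mem_union.mp hm with h | h
    · have := neg_of_mem_N hG (hG.2.1 h)
      omega
    · exact h

def Uset (n : ℕ) (t : Finset ℤ × Finset ℤ × Finset ℤ) : Finset ℤ :=
  Finset.univ.image (sgnL t.2.2 n)

lemma Uset_card (n : ℕ) (t : Finset ℤ × Finset ℤ × Finset ℤ) : (Uset n t).card = n := by
  rw [Uset, Finset.card_image_of_injOn (fun a _ b _ h => sgnL_inj h), Finset.card_univ,
    Fintype.card_fin]

lemma Lset_subset (n : ℕ) (t : Finset ℤ × Finset ℤ × Finset ℤ) : Lset n t ⊆ Uset n t :=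
  Finset.image_subset_image (Finset.subset_univ _)

def Mset (n : ℕ) (t : Finset ℤ × Finset ℤ × Finset ℤ) : Finset ℤ := Uset n t \ Lset n t

lemma Mset_card (n : ℕ) (t : Finset ℤ × Finset ℤ × Finset ℤ) :
    (Mset n t).card = n - (F0 n t).card := by
  rw [Mset, Finset.card_sdiff_of_subset (Lset_subset n t), Uset_card, Lset_card]

/-- enumeration of the prefix letters in increasing order -/
noncomputable def oLiso (n : ℕ) (t : Finset ℤ × Finset ℤ × Finset ℤ) :
    Fin ((F0 n t).card) ≃o {x // x ∈ Lset n t} :=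
  (Lset n t).orderIsoOfFin (Lset_card n t)

/-- enumeration of the remaining letters in increasing order -/
noncomputable def oMiso (n : ℕ) (t : Finset ℤ × Finset ℤ × Finset ℤ) :
    Fin (n - (F0 n t).card) ≃o {x // x ∈ Mset n t} :=
  (Mset n t).orderIsoOfFin (Mset_card n t)

/-- the word whose prefix is the increasing enumeration of the prescribed letters and whose
suffix is the pattern `ρ` on the remaining letters -/
noncomputable def vW (n : ℕ) (t : Finset ℤ × Finset ℤ × Finset ℤ)
    (ρ : Equiv.Perm (Fin (n - (F0 n t).card))) : ℕ → ℤ :=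
  fun i =>
    if h : i < (F0 n t).card then (oLiso n t ⟨i, h⟩ : ℤ)
    else if h2 : i < n then (oMiso n t (ρ ⟨i - (F0 n t).card, by
      have := F0_card_le n t; omega⟩) : ℤ)
    else 0

lemma vW_lt {n : ℕ} {t : Finset ℤ × Finset ℤ × Finset ℤ}
    (ρ : Equiv.Perm (Fin (n - (F0 n t).card))) {i : ℕ} (h : i < (F0 n t).card) :
    vW n t ρ i = (oLiso n t ⟨i, h⟩ : ℤ) := by
  rw [vW, dif_pos h]

lemma vW_ge {n : ℕ} {t : Finset ℤ × Finset ℤ × Finset ℤ}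
    (ρ : Equiv.Perm (Fin (n - (F0 n t).card))) (j : Fin (n - (F0 n t).card)) :
    vW n t ρ ((F0 n t).card + (j : ℕ)) = (oMiso n t (ρ j) : ℤ) := by
  have h1 : ¬ ((F0 n t).card + (j : ℕ) < (F0 n t).card) := by omega
  have h2 : (F0 n t).card + (j : ℕ) < n := by
    have := j.2; omega
  rw [vW, dif_neg h1, dif_pos h2]
  congr 2
  apply Fin.ext
  simp

lemma vW_zero {n : ℕ} {t : Finset ℤ × Finset ℤ × Finset ℤ}
    (ρ : Equiv.Perm (Fin (n - (F0 n t).card))) {i : ℕ} (h : ¬ i < n) : vW n t ρ i = 0 := by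
  have := F0_card_le n t
  rw [vW, dif_neg (by omega), dif_neg h]

lemma vW_mem {n : ℕ} {t : Finset ℤ × Finset ℤ × Finset ℤ}
    (ρ : Equiv.Perm (Fin (n - (F0 n t).card))) {i : ℕ} (h : i < n) :
    vW n t ρ i ∈ Uset n t := by
  rw [vW]
  by_cases h1 : i < (F0 n t).card
  · rw [dif_pos h1]
    exact Lset_subset n t (oLiso n t ⟨i, h1⟩).2
  · rw [dif_neg h1, dif_pos h]
    exact (Finset.sdiff_subset) (oMiso n t _).2

lemma vW_inj {n : ℕ} {t : Finset ℤ × Finset ℤ × Finset ℤ}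
    (ρ : Equiv.Perm (Fin (n - (F0 n t).card))) {i j : ℕ} (hi : i < n) (hj : j < n)
    (h : vW n t ρ i = vW n t ρ j) : i = j := by
  have hML : ∀ z ∈ Mset n t, z ∉ Lset n t := by
    intro z hz
    rw [Mset, Finset.mem_sdiff] at hz
    exact hz.2
  simp only [vW] at h
  by_cases h1 : i < (F0 n t).card <;> by_cases h2 : j < (F0 n t).card
  · rw [dif_pos h1, dif_pos h2] at h
    have := (oLiso n t).injective (Subtype.ext h)
    simpa [Fin.ext_iff] using this
  · rw [dif_pos h1, dif_neg h2, dif_pos hj] at h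
    exact absurd (h ▸ (oLiso n t ⟨i, h1⟩).2) (hML _ (oMiso n t _).2)
  · rw [dif_neg h1, dif_pos h2, dif_pos hi] at h
    exact absurd (h.symm ▸ (oLiso n t ⟨j, h2⟩).2) (hML _ (oMiso n t _).2)
  · rw [dif_neg h1, dif_pos hi, dif_neg h2, dif_pos hj] at h
    have := (oMiso n t).injective (Subtype.ext h)
    have := ρ.injective this
    simp only [Fin.ext_iff] at this
    omega

/-- inverse of the letter map -/
noncomputable def linvF (n : ℕ) (hn : 0 < n) : ℤ → Fin n :=
  fun z => if h : z.natAbs - 1 < n then ⟨z.natAbs - 1, h⟩ else ⟨0, hn⟩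

lemma linvF_sgnL {n : ℕ} (hn : 0 < n) {N : Finset ℤ} (a : Fin n) :
    linvF n hn (sgnL N n a) = a := by
  rw [linvF]
  have h := sgnL_natAbs (N := N) a
  rw [dif_pos (by omega)]
  apply Fin.ext
  simp
  omega

lemma sgnL_linvF {n : ℕ} (hn : 0 < n) {t : Finset ℤ × Finset ℤ × Finset ℤ} {z : ℤ}
    (hz : z ∈ Uset n t) : sgnL t.2.2 n (linvF n hn z) = z := by
  rw [Uset, Finset.mem_image] at hz
  obtain ⟨a, -, rfl⟩ := hz
  rw [linvF_sgnL hn a]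

/-- the signed permutation realizing the word `vW n t ρ` -/
noncomputable def tauN (n : ℕ) (hn : 0 < n) (t : Finset ℤ × Finset ℤ × Finset ℤ)
    (ρ : Equiv.Perm (Fin (n - (F0 n t).card))) : Equiv.Perm (Fin n) :=
  Equiv.ofBijective (fun i => linvF n hn (vW n t ρ (i : ℕ)))
    (Finite.injective_iff_bijective.mp (by
      intro i j hij
      have h1 : sgnL t.2.2 n (linvF n hn (vW n t ρ (i : ℕ)))
          = sgnL t.2.2 n (linvF n hn (vW n t ρ (j : ℕ))) := congrArg _ hij
      rw [sgnL_linvF hn (vW_mem ρ i.2), sgnL_linvF hn (vW_mem ρ j.2)] at h1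
      exact Fin.ext (vW_inj ρ i.2 j.2 h1)))

lemma wN_tauN (n : ℕ) (hn : 0 < n) (t : Finset ℤ × Finset ℤ × Finset ℤ)
    (ρ : Equiv.Perm (Fin (n - (F0 n t).card))) :
    wN t.2.2 n (tauN n hn t ρ) = vW n t ρ := by
  funext i
  by_cases h : i < n
  · rw [wN_apply' _ i h]
    show sgnL t.2.2 n (linvF n hn (vW n t ρ ((⟨i, h⟩ : Fin n) : ℕ))) = vW n t ρ i
    exact sgnL_linvF hn (vW_mem ρ h)
  · rw [wN, dif_neg h, vW_zero ρ h]
-- Section 5: counting the Pix-side fiber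

lemma dlen_vW {n : ℕ} {t : Finset ℤ × Finset ℤ × Finset ℤ}
    {ρ : Equiv.Perm (Fin (n - (F0 n t).card))}
    (hρ : IsDesar (n - (F0 n t).card) (pword (n - (F0 n t).card) ρ)) :
    dlen n (vW n t ρ) = n - (F0 n t).card := by
  have hp : (F0 n t).card ≤ n := F0_card_le n t
  apply dlen_eq_of hp
  · intro i hi
    rw [vW_lt ρ (show i < (F0 n t).card by omega), vW_lt ρ hi]
    exact Subtype.coe_lt_coe.mpr ((oLiso n t).strictMono (Fin.mk_lt_mk.mpr (by omega)))
  · apply isDesar_congr (x := pword (n - (F0 n t).card) ρ) ?_ hρ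
    intro i j hi hj
    have h1 : vW n t ρ ((F0 n t).card + i) = (oMiso n t (ρ ⟨i, hi⟩) : ℤ) := vW_ge ρ ⟨i, hi⟩
    have h2 : vW n t ρ ((F0 n t).card + j) = (oMiso n t (ρ ⟨j, hj⟩) : ℤ) := vW_ge ρ ⟨j, hj⟩
    show pword _ ρ i < pword _ ρ j ↔ vW n t ρ ((F0 n t).card + i) < vW n t ρ ((F0 n t).card + j)
    rw [h1, h2, pword_lt_iff ρ hi hj]
    exact (Subtype.coe_lt_coe.trans (OrderIso.lt_iff_lt _)).symm

lemma pixM_vW {n : ℕ} {t : Finset ℤ × Finset ℤ × Finset ℤ} (hG : GoodT n t)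
    {ρ : Equiv.Perm (Fin (n - (F0 n t).card))}
    (hρ : IsDesar (n - (F0 n t).card) (pword (n - (F0 n t).card) ρ)) :
    PixMinusSet n (vW n t ρ) = t.1 := by
  have hp : (F0 n t).card ≤ n := F0_card_le n t
  have hd := dlen_vW hρ
  have hnd : n - dlen n (vW n t ρ) = (F0 n t).card := by omega
  ext z
  rw [mem_PixMinusSet_iff, hnd, mem_Fm_iff hG]
  constructor
  · rintro ⟨i, hip, hneg, rfl⟩
    rw [vW_lt ρ hip] at hneg ⊢
    exact ⟨(oLiso n t ⟨i, hip⟩).2, hneg⟩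
  · rintro ⟨hzL, hneg⟩
    set a := (oLiso n t).symm ⟨z, hzL⟩ with ha
    refine ⟨(a : ℕ), a.2, ?_, ?_⟩
    · have : vW n t ρ (a : ℕ) = z := by
        rw [vW_lt ρ a.2]
        have h1 : ((oLiso n t) ⟨(a : ℕ), a.2⟩ : ℤ) = ((oLiso n t) a : ℤ) := rfl
        rw [h1, ha, OrderIso.apply_symm_apply]
      rw [this]; exact hneg
    · rw [vW_lt ρ a.2]
      have h1 : ((oLiso n t) ⟨(a : ℕ), a.2⟩ : ℤ) = ((oLiso n t) a : ℤ) := rfl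
      rw [h1, ha, OrderIso.apply_symm_apply]

lemma pixP_vW {n : ℕ} {t : Finset ℤ × Finset ℤ × Finset ℤ} (hG : GoodT n t)
    {ρ : Equiv.Perm (Fin (n - (F0 n t).card))}
    (hρ : IsDesar (n - (F0 n t).card) (pword (n - (F0 n t).card) ρ)) :
    PixPlusSet n (vW n t ρ) = t.2.1 := by
  have hp : (F0 n t).card ≤ n := F0_card_le n t
  have hd := dlen_vW hρ
  have hnd : n - dlen n (vW n t ρ) = (F0 n t).card := by omega
  ext z
  rw [mem_PixPlusSet_iff, hnd, mem_Fp_iff hG]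
  constructor
  · rintro ⟨i, hip, hpos, rfl⟩
    rw [vW_lt ρ hip] at hpos ⊢
    exact ⟨(oLiso n t ⟨i, hip⟩).2, hpos⟩
  · rintro ⟨hzL, hpos⟩
    set a := (oLiso n t).symm ⟨z, hzL⟩ with ha
    refine ⟨(a : ℕ), a.2, ?_, ?_⟩
    · have : vW n t ρ (a : ℕ) = z := by
        rw [vW_lt ρ a.2]
        have h1 : ((oLiso n t) ⟨(a : ℕ), a.2⟩ : ℤ) = ((oLiso n t) a : ℤ) := rfl
        rw [h1, ha, OrderIso.apply_symm_apply]
      rw [this]; exact hpos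
    · rw [vW_lt ρ a.2]
      have h1 : ((oLiso n t) ⟨(a : ℕ), a.2⟩ : ℤ) = ((oLiso n t) a : ℤ) := rfl
      rw [h1, ha, OrderIso.apply_symm_apply]

lemma pixFiberCard (n : ℕ) (hn : 0 < n) (t : Finset ℤ × Finset ℤ × Finset ℤ)
    (hG : GoodT n t) :
    Fintype.card {τ : Equiv.Perm (Fin n) //
        PixMinusSet n (wN t.2.2 n τ) = t.1 ∧ PixPlusSet n (wN t.2.2 n τ) = t.2.1}
      = Fintype.card {ρ : Equiv.Perm (Fin (n - (F0 n t).card)) //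
          IsDesar (n - (F0 n t).card) (pword (n - (F0 n t).card) ρ)} := by
  have hp : (F0 n t).card ≤ n := F0_card_le n t
  set N := t.2.2 with hN
  set p := (F0 n t).card with hpdef
  -- the map from desarrangement patterns to pix-fibered permutations
  set Ψ : {ρ : Equiv.Perm (Fin (n - p)) // IsDesar (n - p) (pword (n - p) ρ)}
      → {τ : Equiv.Perm (Fin n) //
          PixMinusSet n (wN N n τ) = t.1 ∧ PixPlusSet n (wN N n τ) = t.2.1} :=
    fun ρs => ⟨tauN n hn t ρs.1, by
      rw [wN_tauN n hn t ρs.1]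
      exact ⟨pixM_vW hG ρs.2, pixP_vW hG ρs.2⟩⟩ with hΨ
  have hbij : Function.Bijective Ψ := by
    constructor
    · rintro ⟨ρ, hρ⟩ ⟨ρ', hρ'⟩ h
      have htau : tauN n hn t ρ = tauN n hn t ρ' := congrArg Subtype.val h
      have hvv : vW n t ρ = vW n t ρ' := by
        rw [← wN_tauN n hn t ρ, ← wN_tauN n hn t ρ', htau]
      apply Subtype.ext
      apply Equiv.ext
      intro j
      have h1 := vW_ge ρ j
      have h2 := vW_ge ρ' j
      rw [hvv] at h1
      rw [h1] at h2
      exact (oMiso n t).injective (Subtype.ext h2)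
    · rintro ⟨τ, hτM, hτP⟩
      set x := wN N n τ with hx
      obtain ⟨hdn, hdesar⟩ := dlen_spec n x
      have hxinj : ∀ i j, i < n → j < n → x i = x j → i = j :=
        fun i j hi hj h => wN_inj τ hi hj h
      have hxU : ∀ i, i < n → x i ∈ Uset n t := by
        intro i hi
        rw [hx, wN_apply' τ i hi]
        exact Finset.mem_image_of_mem _ (Finset.mem_univ _)
      have himg : (Finset.range (n - dlen n x)).image x = Lset n t := by
        rw [Lset_eq hG]
        ext z
        rw [Finset.mem_image]
        constructor
        · rintro ⟨i, hi, rfl⟩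
          rw [Finset.mem_range] at hi
          have hin : i < n := by omega
          have hne : x i ≠ 0 := by
            rw [hx, wN_apply' τ i hin]; exact sgnL_ne_zero _
          rcases lt_trichotomy (x i) 0 with hneg | h0 | hpos
          · exact Finset.mem_union_left _
              (by rw [← hτM, mem_PixMinusSet_iff]; exact ⟨i, hi, hneg, rfl⟩)
          · exact absurd h0 hne
          · exact Finset.mem_union_right _
              (by rw [← hτP, mem_PixPlusSet_iff]; exact ⟨i, hi, hpos, rfl⟩)
        · intro hz
          rcases Finset.mem_union.mp hz with hm | hm
          · rw [← hτM, mem_PixMinusSet_iff] at hm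
            obtain ⟨i, h1, h2, h3⟩ := hm
            exact ⟨i, Finset.mem_range.mpr h1, h3⟩
          · rw [← hτP, mem_PixPlusSet_iff] at hm
            obtain ⟨i, h1, h2, h3⟩ := hm
            exact ⟨i, Finset.mem_range.mpr h1, h3⟩
      have hpd : n - dlen n x = p := by
        have hcard := congrArg Finset.card himg
        rw [Finset.card_image_of_injOn (by
          intro i hi j hj hij
          rw [Finset.mem_coe, Finset.mem_range] at hi hj
          exact hxinj i j (by omega) (by omega) hij), Finset.card_range, Lset_card] at hcard
        exact hcard
      have hd : dlen n x = n - p := by omega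
      have hincr : ∀ i, i + 1 < p → x i < x (i + 1) := by
        intro i hi
        exact dlen_prefix_incr hxinj i (by omega)
      haveI : WellFoundedLT (Fin p) := Finite.to_wellFoundedLT
      have hpre : ∀ i (h : i < p), x i = (oLiso n t ⟨i, h⟩ : ℤ) := by
        set g1 : Fin p → ℤ := fun a => x (a : ℕ) with hg1
        set g2 : Fin p → ℤ := fun a => (oLiso n t a : ℤ) with hg2
        have hg1m : StrictMono g1 := by
          intro a b hab
          have hchain := desc_chain (x := fun i => -(x i)) (j := p)
            (fun i hi => by show -(x (i+1)) < -(x i); have := hincr i hi; omega) (a : ℕ) (b : ℕ) hab b.2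
          have hc : -(x (b : ℕ)) < -(x (a : ℕ)) := hchain
          show x (a : ℕ) < x (b : ℕ)
          omega
        have hg2m : StrictMono g2 :=
          fun a b hab => Subtype.coe_lt_coe.mpr ((oLiso n t).strictMono hab)
        have hr1 : Set.range g1 = ↑(Lset n t) := by
          rw [← himg]
          ext z
          simp only [Set.mem_range, Finset.coe_image, Set.mem_image, Finset.mem_coe,
            Finset.mem_range]
          constructor
          · rintro ⟨a, rfl⟩
            exact ⟨(a : ℕ), by have := a.2; omega, rfl⟩
          · rintro ⟨i, hi, rfl⟩
            exact ⟨⟨i, by omega⟩, rfl⟩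
        have hr2 : Set.range g2 = ↑(Lset n t) := by
          rw [hg2]
          have h1 : Set.range (fun a : Fin p => ((oLiso n t a : ℤ))) 
              = Subtype.val '' (Set.range (oLiso n t)) := by
            rw [← Set.range_comp]; rfl
          rw [h1, (oLiso n t).surjective.range_eq, Set.image_univ, Subtype.range_coe_subtype]
          ext z; simp
        have hgg := (StrictMono.range_inj hg1m hg2m).mp (hr1.trans hr2.symm)
        intro i h
        exact congrFun hgg ⟨i, h⟩
      have hsufM : ∀ j : Fin (n - p), x (p + (j : ℕ)) ∈ Mset n t := by
        intro j
        rw [Mset, Finset.mem_sdiff]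
        have hjn : p + (j : ℕ) < n := by have := j.2; omega
        refine ⟨hxU _ hjn, ?_⟩
        intro hzL
        rw [← himg, Finset.mem_image] at hzL
        obtain ⟨i, hi, heq⟩ := hzL
        rw [Finset.mem_range] at hi
        have := hxinj i (p + (j : ℕ)) (by omega) hjn heq
        omega
      have hρinj : Function.Injective
          (fun j : Fin (n - p) => (oMiso n t).symm ⟨x (p + (j : ℕ)), hsufM j⟩) := by
        intro a b hab
        have h1 := congrArg (oMiso n t) hab
        rw [OrderIso.apply_symm_apply, OrderIso.apply_symm_apply] at h1
        have h2 := congrArg Subtype.val h1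
        have h3 : x (p + (a : ℕ)) = x (p + (b : ℕ)) := h2
        have := hxinj _ _ (by have := a.2; omega) (by have := b.2; omega) h3
        exact Fin.ext (by omega)
      set ρ : Equiv.Perm (Fin (n - p)) := Equiv.ofBijective _
        (Finite.injective_iff_bijective.mp hρinj) with hρdef
      have hxsuf : ∀ j : Fin (n - p), x (p + (j : ℕ)) = (oMiso n t (ρ j) : ℤ) := by
        intro j
        show x (p + (j : ℕ))
          = ((oMiso n t) ((oMiso n t).symm ⟨x (p + (j : ℕ)), hsufM j⟩) : ℤ)
        rw [OrderIso.apply_symm_apply]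
      have hρdes : IsDesar (n - p) (pword (n - p) ρ) := by
        have hdes2 : IsDesar (n - p) (fun i => x (p + i)) := by
          rw [← hd, ← hpd]
          exact hdesar
        apply isDesar_congr (x := fun i => x (p + i)) ?_ hdes2
        intro i j hi hj
        have h1 : x (p + i) = (oMiso n t (ρ ⟨i, hi⟩) : ℤ) := hxsuf ⟨i, hi⟩
        have h2 : x (p + j) = (oMiso n t (ρ ⟨j, hj⟩) : ℤ) := hxsuf ⟨j, hj⟩
        show x (p + i) < x (p + j) ↔ pword _ ρ i < pword _ ρ j
        rw [h1, h2, pword_lt_iff ρ hi hj]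
        exact Subtype.coe_lt_coe.trans (OrderIso.lt_iff_lt _)
      refine ⟨⟨ρ, hρdes⟩, ?_⟩
      apply Subtype.ext
      show tauN n hn t ρ = τ
      apply Equiv.ext
      intro i
      have hs : sgnL N n (tauN n hn t ρ i) = vW n t ρ (i : ℕ) := by
        show sgnL N n (linvF n hn (vW n t ρ (i : ℕ))) = _
        exact sgnL_linvF hn (vW_mem ρ i.2)
      have hs2 : sgnL N n (τ i) = x (i : ℕ) := (wN_applyF τ i).symm
      have hv : vW n t ρ (i : ℕ) = x (i : ℕ) := by
        by_cases hip : (i : ℕ) < p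
        · rw [vW_lt ρ hip, ← hpre _ hip]
        · have hj : (i : ℕ) - p < n - p := by have := i.2; omega
          have he : (i : ℕ) = p + (((⟨(i : ℕ) - p, hj⟩ : Fin (n - p))) : ℕ) := by
            simp; omega
          rw [he]
          have h1 : vW n t ρ (p + (((⟨(i : ℕ) - p, hj⟩ : Fin (n - p))) : ℕ))
              = (oMiso n t (ρ ⟨(i : ℕ) - p, hj⟩) : ℤ) := vW_ge ρ _
          rw [h1, ← hxsuf ⟨(i : ℕ) - p, hj⟩]
      apply sgnL_inj (N := N)
      rw [hs, hs2, hv]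
  exact (Fintype.card_congr (Equiv.ofBijective Ψ hbij)).symm

/-- counting the Pix-side fiber -/
lemma SCount (n : ℕ) (hn : 0 < n) (t : Finset ℤ × Finset ℤ × Finset ℤ) (hG : GoodT n t) :
    Fintype.card {w : Equiv.Perm (Fin n) × (Fin n → Bool) //
        (PixMinusSet n (sword n w), PixPlusSet n (sword n w), NegSet n (sword n w)) = t}
      = numDerangements (n - (F0 n t).card) := by
  have e1 : {w : Equiv.Perm (Fin n) × (Fin n → Bool) //
        (PixMinusSet n (sword n w), PixPlusSet n (sword n w), NegSet n (sword n w)) = t}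
      ≃ {w : Equiv.Perm (Fin n) × (Fin n → Bool) //
        NegSet n (sword n w) = t.2.2 ∧ (PixMinusSet n (sword n w) = t.1
          ∧ PixPlusSet n (sword n w) = t.2.1)} := by
    apply Equiv.subtypeEquivRight
    intro w
    rw [Prod.ext_iff, Prod.ext_iff]
    tauto
  have e2 := negFiberEquiv n t.2.2 hG.1
    (fun x => PixMinusSet n x = t.1 ∧ PixPlusSet n x = t.2.1)
  rw [Fintype.card_congr (e1.trans e2), pixFiberCard n hn t hG, card_desar']
lemma fixSets_zero (x : ℕ → ℤ) :
    (FixMinusSet 0 x, FixPlusSet 0 x, NegSet 0 x)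
      = (PixMinusSet 0 x, PixPlusSet 0 x, NegSet 0 x) := by
  have h1 : FixMinusSet 0 x = PixMinusSet 0 x := by
    ext z
    rw [mem_FixMinusSet_iff, mem_PixMinusSet_iff]
    constructor
    · rintro ⟨i, hi, -⟩; omega
    · rintro ⟨i, hi, -⟩; omega
  have h2 : FixPlusSet 0 x = PixPlusSet 0 x := by
    ext z
    rw [mem_FixPlusSet_iff, mem_PixPlusSet_iff]
    constructor
    · rintro ⟨i, hi, -⟩; omega
    · rintro ⟨i, hi, -⟩; omega
  rw [h1, h2]

theorem stmt3 (n : ℕ) :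
    ∃ φ : (Equiv.Perm (Fin n) × (Fin n → Bool)) ≃ (Equiv.Perm (Fin n) × (Fin n → Bool)),
      ∀ w, FixMinusSet n (sword n w) = PixMinusSet n (sword n (φ w)) ∧
           FixPlusSet n (sword n w) = PixPlusSet n (sword n (φ w)) ∧
           NegSet n (sword n w) = NegSet n (sword n (φ w)) := by
  have key : ∀ t : Finset ℤ × Finset ℤ × Finset ℤ,
      Fintype.card {w : Equiv.Perm (Fin n) × (Fin n → Bool) //
        (fun w => (FixMinusSet n (sword n w), FixPlusSet n (sword n w),
          NegSet n (sword n w))) w = t}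
      = Fintype.card {w : Equiv.Perm (Fin n) × (Fin n → Bool) //
        (fun w => (PixMinusSet n (sword n w), PixPlusSet n (sword n w),
          NegSet n (sword n w))) w = t} := by
    intro t
    by_cases hG : GoodT n t
    · rcases Nat.eq_zero_or_pos n with rfl | hn
      · apply Fintype.card_congr
        apply Equiv.subtypeEquivRight
        intro w
        show (FixMinusSet 0 (sword 0 w), _, _) = t ↔ (PixMinusSet 0 (sword 0 w), _, _) = t
        rw [show (FixMinusSet 0 (sword 0 w), FixPlusSet 0 (sword 0 w), NegSet 0 (sword 0 w))
          = (PixMinusSet 0 (sword 0 w), PixPlusSet 0 (sword 0 w), NegSet 0 (sword 0 w))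
          from fixSets_zero _]
      · show Fintype.card {w : Equiv.Perm (Fin n) × (Fin n → Bool) //
            (FixMinusSet n (sword n w), FixPlusSet n (sword n w), NegSet n (sword n w)) = t}
          = Fintype.card {w : Equiv.Perm (Fin n) × (Fin n → Bool) //
            (PixMinusSet n (sword n w), PixPlusSet n (sword n w), NegSet n (sword n w)) = t}
        rw [TCount n t hG, SCount n hn t hG]
    · have hTe : Fintype.card {w : Equiv.Perm (Fin n) × (Fin n → Bool) //
          (fun w => (FixMinusSet n (sword n w), FixPlusSet n (sword n w),
            NegSet n (sword n w))) w = t} = 0 := by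
        rw [Fintype.card_eq_zero_iff]
        exact ⟨fun ⟨w, hw⟩ => hG (hw ▸ goodT_fix w)⟩
      have hSe : Fintype.card {w : Equiv.Perm (Fin n) × (Fin n → Bool) //
          (fun w => (PixMinusSet n (sword n w), PixPlusSet n (sword n w),
            NegSet n (sword n w))) w = t} = 0 := by
        rw [Fintype.card_eq_zero_iff]
        exact ⟨fun ⟨w, hw⟩ => hG (hw ▸ goodT_pix w)⟩
      rw [hTe, hSe]
  refine ⟨Equiv.ofFiberEquiv
    (f := fun w => (FixMinusSet n (sword n w), FixPlusSet n (sword n w), NegSet n (sword n w)))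
    (g := fun w => (PixMinusSet n (sword n w), PixPlusSet n (sword n w), NegSet n (sword n w)))
    (fun t => Fintype.equivOfCardEq (key t)), ?_⟩
  intro w
  have h := Equiv.ofFiberEquiv_map
    (f := fun w => (FixMinusSet n (sword n w), FixPlusSet n (sword n w), NegSet n (sword n w)))
    (g := fun w => (PixMinusSet n (sword n w), PixPlusSet n (sword n w), NegSet n (sword n w)))
    (fun t => Fintype.equivOfCardEq (key t)) w
  rw [Prod.ext_iff, Prod.ext_iff] at h
  obtain ⟨h1, h2, h3⟩ := h
  exact ⟨h1.symm, h2.symm, h3.symm⟩
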